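/- arXiv:2211.02503 — 5 statements merged into one kernel-verified Lean document; each statement's English description precedes it below -/
import Mathlib

section
/- Let C be a d-dimensional copula whose ℓ-dimensional marginal C^{1:ℓ} is absolutely continuous with respect to λ_ℓ, for some ℓ ∈ {2,…,d−1}. Then μ_C is singular with respect to the Lebesgue measure λ_d if, and only if, there exists a set Λ ∈ B([0,1]^ℓ) with μ_{C^{1:ℓ}}(Λ) = 1 such that for every x ∈ Λ the probability measure K_C(x,·) on B([0,1]^{d−ℓ}) is singular with respect to λ_{d−ℓ}. -/
open MeasureTheory ProbabilityTheory Set Filter Topology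
open scoped ENNReal

noncomputable section

/-- `K` disintegrates `μ` over its first marginal:
`μ(G) = ∫ K(x, G_x) dμ^{1:ℓ}(x)` for every Borel set `G`. -/
def IsDisintegration {α β : Type*} [MeasurableSpace α] [MeasurableSpace β]
    (μ : Measure (α × β)) (K : Kernel α β) : Prop :=
  ∀ G : Set (α × β), MeasurableSet G →
    μ G = ∫⁻ a, K a (Prod.mk a ⁻¹' G) ∂(μ.map Prod.fst)

/-- **Theorem 5.1.** Let `C` be a `d`-dimensional copula (modeled by its measure `μ` on
`ℝ^ℓ × ℝ^{d-ℓ}`, with uniform `[0,1]` univariate marginals) whose `ℓ`-dimensional marginal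
is absolutely continuous w.r.t. `λ_ℓ`, for some `ℓ ∈ {2,…,d-1}`, and let `K` be (a version
of) its `ℓ`-Markov kernel. Then `μ_C ⟂ λ_d` if and only if there is a set
`Λ ∈ B([0,1]^ℓ)` with `μ_{C^{1:ℓ}}(Λ) = 1` such that `K(x,·) ⟂ λ_{d-ℓ}` for every
`x ∈ Λ`. -/
theorem copula_singular_iff_kernel_singular
    (d l : ℕ) (hl1 : 2 ≤ l) (hl2 : l ≤ d - 1)
    (μ : Measure ((Fin l → ℝ) × (Fin (d - l) → ℝ))) (hμp : IsProbabilityMeasure μ)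
    (hmarg1 : ∀ i : Fin l, μ.map (fun p => p.1 i) = volume.restrict (Icc (0:ℝ) 1))
    (hmarg2 : ∀ j : Fin (d - l), μ.map (fun p => p.2 j) = volume.restrict (Icc (0:ℝ) 1))
    (habs : μ.map Prod.fst ≪ (volume : Measure (Fin l → ℝ)))
    (K : Kernel (Fin l → ℝ) (Fin (d - l) → ℝ)) (hK : IsMarkovKernel K)
    (hdis : IsDisintegration μ K) :
    μ ⟂ₘ (volume : Measure ((Fin l → ℝ) × (Fin (d - l) → ℝ))) ↔
      ∃ Λ : Set (Fin l → ℝ), MeasurableSet Λ ∧ μ.map Prod.fst Λ = 1 ∧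
        ∀ x ∈ Λ, (K x) ⟂ₘ (volume : Measure (Fin (d - l) → ℝ)) := by
  haveI := hμp
  haveI := hK
  set α := (Fin l → ℝ)
  set β := (Fin (d - l) → ℝ)
  set ν : Measure α := μ.map Prod.fst with hν
  haveI : IsProbabilityMeasure ν := Measure.isProbabilityMeasure_map measurable_fst.aemeasurable
  have hvol : (volume : Measure (α × β)) = (volume : Measure α).prod (volume : Measure β) :=
    Measure.volume_eq_prod α β
  constructor
  · -- forward direction
    rintro ⟨s, hs, hμs, hLs⟩
    -- from μ s = 0 get a.e. K x (s_x) = 0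
    have h1 : ∫⁻ x, K x (Prod.mk x ⁻¹' s) ∂ν = 0 := by
      rw [← hdis s hs]; exact hμs
    have hm1 : Measurable fun x => K x (Prod.mk x ⁻¹' s) :=
      Kernel.measurable_kernel_prodMk_left hs
    have h1' : ∀ᵐ x ∂ν, K x (Prod.mk x ⁻¹' s) = 0 := (lintegral_eq_zero_iff hm1).mp h1
    -- from λ sᶜ = 0 get λ₁-a.e. λ₂((sᶜ)_x) = 0, hence ν-a.e.
    have h2 : ∀ᵐ x ∂(volume : Measure α), (volume : Measure β) (Prod.mk x ⁻¹' sᶜ) = 0 := by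
      have : (volume : Measure α).prod (volume : Measure β) sᶜ = 0 := by
        rw [← hvol]; exact hLs
      have := (Measure.measure_prod_null hs.compl).mp this
      filter_upwards [this] with x hx using hx
    have h2' : ∀ᵐ x ∂ν, (volume : Measure β) (Prod.mk x ⁻¹' sᶜ) = 0 := habs.ae_le h2
    have hmeas : MeasurableSet {x : α | K x (Prod.mk x ⁻¹' s) = 0 ∧
        (volume : Measure β) (Prod.mk x ⁻¹' sᶜ) = 0} :=
      (hm1 (measurableSet_singleton 0)).inter
        ((measurable_measure_prodMk_left hs.compl) (measurableSet_singleton 0))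
    refine ⟨{x | K x (Prod.mk x ⁻¹' s) = 0 ∧ (volume : Measure β) (Prod.mk x ⁻¹' sᶜ) = 0},
      hmeas, ?_, ?_⟩
    · have hae : ∀ᵐ x ∂ν, x ∈ {x : α | K x (Prod.mk x ⁻¹' s) = 0 ∧
          (volume : Measure β) (Prod.mk x ⁻¹' sᶜ) = 0} := by
        filter_upwards [h1', h2'] with x hx1 hx2 using ⟨hx1, hx2⟩
      have hc : ν {x : α | K x (Prod.mk x ⁻¹' s) = 0 ∧
          (volume : Measure β) (Prod.mk x ⁻¹' sᶜ) = 0}ᶜ = 0 := by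
        rw [ae_iff] at hae
        rw [Set.compl_setOf]
        exact hae
      exact (prob_compl_eq_zero_iff hmeas).mp hc
    · intro x hx
      exact ⟨Prod.mk x ⁻¹' s, measurable_prodMk_left hs, hx.1, by
        rw [← Set.preimage_compl]; exact hx.2⟩
  · -- backward direction
    rintro ⟨Λ, hΛm, hΛ1, hΛsing⟩
    -- the unit cube in β
    set I₂ : Set β := Set.pi Set.univ (fun _ => Icc (0:ℝ) 1) with hI₂
    have hI₂m : MeasurableSet I₂ := MeasurableSet.univ_pi (fun _ => measurableSet_Icc)
    -- μ gives no mass outside the cube in the second coordinate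
    have hμC : μ (Set.univ ×ˢ I₂ᶜ) = 0 := by
      have hsub : (Set.univ ×ˢ I₂ᶜ : Set (α × β)) ⊆
          ⋃ j : Fin (d - l), {p : α × β | p.2 j ∈ (Icc (0:ℝ) 1)ᶜ} := by
        rintro ⟨x, y⟩ ⟨-, hy⟩
        rw [Set.mem_compl_iff, hI₂, Set.mem_univ_pi] at hy
        push_neg at hy
        obtain ⟨j, hj⟩ := hy
        exact Set.mem_iUnion.mpr ⟨j, hj⟩
      refine measure_mono_null hsub (measure_iUnion_null fun j => ?_)
      have : μ {p : α × β | p.2 j ∈ (Icc (0:ℝ) 1)ᶜ}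
          = (μ.map (fun p : α × β => p.2 j)) (Icc (0:ℝ) 1)ᶜ := by
        rw [Measure.map_apply (measurable_snd.eval) measurableSet_Icc.compl]
        rfl
      rw [this, hmarg2 j, Measure.restrict_apply measurableSet_Icc.compl]
      simp
    -- the auxiliary finite kernel: constant equal to volume restricted to the cube
    have hI₂fin : IsFiniteMeasure ((volume : Measure β).restrict I₂) := by
      constructor
      rw [Measure.restrict_apply_univ]
      have hIv : (volume : Measure β) I₂ = ∏ _i : Fin (d - l), volume (Icc (0:ℝ) 1) := by
        rw [hI₂, volume_pi_pi]
      rw [hIv]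
      simp [Real.volume_Icc]
    haveI := hI₂fin
    set η : Kernel α β := Kernel.const α ((volume : Measure β).restrict I₂) with hη
    -- the jointly-measurable mutually singular set
    set M : Set (α × β) := Kernel.mutuallySingularSet K η with hM
    have hMm : MeasurableSet M := Kernel.measurableSet_mutuallySingularSet K η
    -- for x ∈ Λ, K x is carried by the slice M_x
    have hcarr : ∀ x ∈ Λ, K x (Prod.mk x ⁻¹' M)ᶜ = 0 := by
      intro x hx
      have hsing : K x ⟂ₘ (volume : Measure β) := hΛsing x hx
      have hsing' : K x ⟂ₘ η x := by
        rw [hη, Kernel.const_apply]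
        exact hsing.mono_ac Measure.AbsolutelyContinuous.rfl
          Measure.restrict_le_self.absolutelyContinuous
      have hwd : Kernel.withDensity η (Kernel.rnDeriv K η) x = 0 :=
        (Kernel.withDensity_rnDeriv_eq_zero_iff_mutuallySingular K η x).mpr hsing'
      have hKx : K x = Kernel.singularPart K η x := by
        have := Kernel.rnDeriv_add_singularPart K η
        have h := congrArg (fun κ : Kernel α β => κ x) this
        simp only [Kernel.add_apply] at h
        rw [← h, hwd, zero_add]
      have hslice : (Prod.mk x ⁻¹' M) = Kernel.mutuallySingularSetSlice K η x := rfl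
      rw [hKx, hslice]
      exact Kernel.singularPart_compl_mutuallySingularSetSlice K η x
    -- the Lebesgue measure of each slice inside the cube is zero
    have hslice0 : ∀ x : α, (volume : Measure β) (Prod.mk x ⁻¹' M ∩ I₂) = 0 := by
      intro x
      have : (volume : Measure β).restrict I₂ (Prod.mk x ⁻¹' M) = 0 := by
        have := Kernel.measure_mutuallySingularSetSlice K η x
        rw [hη, Kernel.const_apply] at this
        exact this
      rwa [Measure.restrict_apply (measurable_prodMk_left hMm)] at this
    -- the carrier set of μ
    set T : Set (α × β) := M ∩ (Λ ×ˢ I₂) with hT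
    have hTm : MeasurableSet T := hMm.inter (hΛm.prod hI₂m)
    refine ⟨Tᶜ, hTm.compl, ?_, ?_⟩
    · -- μ Tᶜ = 0
      have hsub : Tᶜ ⊆ (Mᶜ ∩ (Λ ×ˢ Set.univ)) ∪ ((Λᶜ ×ˢ Set.univ) ∪ (Set.univ ×ˢ I₂ᶜ)) := by
        rintro ⟨x, y⟩ hp
        rw [hT, Set.mem_compl_iff] at hp
        by_cases hxΛ : x ∈ Λ
        · by_cases hyI : y ∈ I₂
          · have hm : (x, y) ∉ M := fun hm => hp ⟨hm, ⟨hxΛ, hyI⟩⟩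
            exact Or.inl ⟨hm, ⟨hxΛ, Set.mem_univ _⟩⟩
          · exact Or.inr (Or.inr ⟨Set.mem_univ _, hyI⟩)
        · exact Or.inr (Or.inl ⟨hxΛ, Set.mem_univ _⟩)
      refine measure_mono_null hsub (measure_union_null ?_ (measure_union_null ?_ hμC))
      · -- μ (Mᶜ ∩ Λ × univ) = 0 via disintegration and hcarr
        have hGm : MeasurableSet (Mᶜ ∩ (Λ ×ˢ (Set.univ : Set β))) :=
          hMm.compl.inter (hΛm.prod MeasurableSet.univ)
        rw [hdis _ hGm]
        refine lintegral_eq_zero_iff (Kernel.measurable_kernel_prodMk_left hGm) |>.mpr ?_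
        refine Filter.Eventually.of_forall fun x => ?_
        by_cases hx : x ∈ Λ
        · have : Prod.mk x ⁻¹' (Mᶜ ∩ (Λ ×ˢ (Set.univ : Set β))) ⊆ (Prod.mk x ⁻¹' M)ᶜ := by
            rintro y ⟨hy, -⟩; exact hy
          simpa using measure_mono_null this (hcarr x hx)
        · have : Prod.mk x ⁻¹' (Mᶜ ∩ (Λ ×ˢ (Set.univ : Set β))) = ∅ := by
            ext y
            simp [hx]
          simp [this]
      · -- μ (Λᶜ × univ) = ν Λᶜ = 0
        have : μ (Λᶜ ×ˢ (Set.univ : Set β)) = ν Λᶜ := by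
          rw [hν, Measure.map_apply measurable_fst hΛm.compl]
          congr 1
          ext p
          simp
        rw [this]
        have := prob_compl_eq_zero_iff hΛm |>.mpr hΛ1
        exact this
    · -- λ (Tᶜ)ᶜ = λ T = 0
      rw [compl_compl, hvol, Measure.prod_apply hTm]
      have hz : ∀ x : α, (volume : Measure β) (Prod.mk x ⁻¹' T) = 0 := by
        intro x
        refine measure_mono_null ?_ (hslice0 x)
        rintro y ⟨hyM, hyΛ, hyI⟩
        exact ⟨hyM, hyI⟩
      simp only [hz, lintegral_zero]
end
end

section
/- Let C be a d-dimensional Archimedean copula with strict generator ψ (i.e. φ(0) = ∞) and let ℓ ∈ {1,…,d−1}. Then the ℓ-Markov kernel of C satisfies, for every x ∈ [0,1]^ℓ with min(x) ∈ (0,1) and all y_{ℓ+1},…,y_d ∈ [0,1]: K_C(x, [0,y_{ℓ+1}]×⋯×[0,y_d]) = K_C(x, [0, C^{ℓ+1:d}(y_{ℓ+1},…,y_d)] × [0,1]^{d−ℓ−1}), and more generally any sub-block of coordinates y_j may be consolidated via the corresponding marginal Archimedean copula, e.g. K_C(x,[0,y_{ℓ+1}]×⋯×[0,y_d]) = K_C(x,[0,y_{ℓ+1}]×[0,C^{ℓ+2:d}(y_{ℓ+2},…,y_d)]×[0,1]^{d−ℓ−2}),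 without changing the value of the kernel. -/
open MeasureTheory ProbabilityTheory Set Filter Topology
open scoped ENNReal

noncomputable section
attribute [local instance] Classical.propDecidable

/-- The lower-orthant box `[0, y] = [0,y₁] × ⋯ × [0,y_k]` (as a lower set in `ℝ^k`;
all measures considered are supported on the unit cube). -/
def lowerBox {k : ℕ} (y : Fin k → ℝ) : Set (Fin k → ℝ) := {t | ∀ i, t i ≤ y i}

/-- The closed unit cube `[0,1]^k`. -/
def unitCube (k : ℕ) : Set (Fin k → ℝ) := {t | ∀ i, t i ∈ Icc (0 : ℝ) 1}

/-- Evaluation of a generator `ψ` at an extended-real argument, with `ψ(∞) = 0`. -/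
def evalPsi (ψ : ℝ → ℝ) (s : ℝ≥0∞) : ℝ := if s = ∞ then 0 else ψ s.toReal

/-- `ψ^{(ℓ)}(s)`, with `ψ^{(ℓ)}` replaced by the left-hand derivative `D⁻ψ^{(d−2)}`
when `ℓ = d − 1`, and extended by `0` at `s = ∞`. -/
def psiD (d l : ℕ) (ψ : ℝ → ℝ) (s : ℝ≥0∞) : ℝ :=
  if s = ∞ then 0
  else if l = d - 1 then derivWithin (iteratedDeriv (d - 2) ψ) (Iio s.toReal) s.toReal
  else iteratedDeriv l ψ s.toReal

/-- `ψ` is a `d`-monotone Archimedean generator, with pseudoinverse `φ`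
(valued in `ℝ≥0∞`; `φ 0 = inf{z : ψ(z) = 0}` which equals `∞` iff the generator is strict). -/
structure IsGenerator (d : ℕ) (ψ : ℝ → ℝ) (φ : ℝ → ℝ≥0∞) : Prop where
  continuousOn : ContinuousOn ψ (Ici 0)
  at_zero : ψ 0 = 1
  tendsto_zero : Tendsto ψ atTop (nhds 0)
  nonneg : ∀ z : ℝ, 0 ≤ z → 0 ≤ ψ z
  antitoneOn : AntitoneOn ψ (Ici 0)
  strict_anti : ∀ z₁ z₂ : ℝ, 0 ≤ z₁ → z₁ < z₂ → 0 < ψ z₂ → ψ z₂ < ψ z₁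
  smooth : ∀ z : ℝ, 0 < z → ContDiffAt ℝ ((d - 2 : ℕ) : ℕ∞) ψ z
  alt_sign : ∀ m : ℕ, m ≤ d - 2 → ∀ z : ℝ, 0 < z → 0 ≤ (-1 : ℝ) ^ m * iteratedDeriv m ψ z
  top_antitone : AntitoneOn (fun z => (-1 : ℝ) ^ (d - 2) * iteratedDeriv (d - 2) ψ z) (Ioi 0)
  top_convex : ConvexOn ℝ (Ioi 0) (fun z => (-1 : ℝ) ^ (d - 2) * iteratedDeriv (d - 2) ψ z)
  phi_finite : ∀ t : ℝ, 0 < t → φ t ≠ ∞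
  phi_one : φ 1 = 0
  phi_antitoneOn : AntitoneOn φ (Ioc 0 1)
  psi_phi : ∀ t : ℝ, 0 < t → t ≤ 1 → evalPsi ψ (φ t) = t
  phi_zero : φ 0 = sInf {s : ℝ≥0∞ | evalPsi ψ s = 0}

/-- The explicit formula for the `ℓ`-Markov kernel of the Archimedean copula generated by
`ψ`, evaluated at the box `[0,y]`.  The first case is `min(x) = 1` or `x ∈ L₀^{1:ℓ}`
(the latter meaning `C^{1:ℓ}(x) = ψ(Σᵢφ(xᵢ)) = 0`); the second case is
`(x,y) ∈ int L₀` (i.e. `Σᵢφ(xᵢ) + Σⱼφ(yⱼ) > φ(0) = inf{z : ψ(z) = 0}`); the third case is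
the ratio `ψ^{(ℓ)}(Σᵢφ(xᵢ) + Σⱼφ(yⱼ)) / ψ^{(ℓ)}(Σᵢφ(xᵢ))`. -/
def archK (d l : ℕ) (ψ : ℝ → ℝ) (φ : ℝ → ℝ≥0∞) (x : Fin l → ℝ) (y : Fin (d - l) → ℝ) : ℝ :=
  if (∀ i, x i = 1) ∨ evalPsi ψ (∑ i, φ (x i)) = 0 then 1
  else if ∃ t : ℝ≥0∞, t < (∑ i, φ (x i)) + ∑ j, φ (y j) ∧ evalPsi ψ t = 0 then 0
  else psiD d l ψ ((∑ i, φ (x i)) + ∑ j, φ (y j)) / psiD d l ψ (∑ i, φ (x i))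


/-- Consolidation of the sub-block `y_{r}, y_{r+1}, …` (0-indexed) of `y` into the single
value `C^{ℓ+r+1:d}(y_r,…) = ψ(Σ_{j ≥ r} φ(y_j))`, padding the remaining coordinates
with `1`. -/
def consolidate {k : ℕ} (ψ : ℝ → ℝ) (φ : ℝ → ℝ≥0∞) (y : Fin k → ℝ) (r : ℕ) : Fin k → ℝ :=
  fun j =>
    if (j : ℕ) < r then y j
    else if (j : ℕ) = r then
      evalPsi ψ (∑ j' ∈ Finset.univ.filter (fun j' : Fin k => r ≤ (j' : ℕ)), φ (y j'))
    else 1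

/-- For a strict generator, `φ` is a genuine left inverse of `evalPsi ψ`. -/
lemma phi_evalPsi (d : ℕ) (ψ : ℝ → ℝ) (φ : ℝ → ℝ≥0∞) (hgen : IsGenerator d ψ φ)
    (hstrict : ∀ z : ℝ, 0 ≤ z → 0 < ψ z) (S : ℝ≥0∞) :
    φ (evalPsi ψ S) = S := by
  by_cases hS : S = ∞
  · subst hS
    have hev : evalPsi ψ ∞ = 0 := by simp [evalPsi]
    rw [hev]
    rw [hgen.phi_zero, sInf_eq_top]
    intro a ha
    by_contra h
    simp only [Set.mem_setOf_eq, evalPsi, if_neg h] at ha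
    exact absurd ha (ne_of_gt (hstrict _ ENNReal.toReal_nonneg))
  · have ht0 : 0 < ψ S.toReal := hstrict _ ENNReal.toReal_nonneg
    have ht1 : ψ S.toReal ≤ 1 := by
      have := hgen.antitoneOn (Set.mem_Ici.mpr le_rfl)
        (Set.mem_Ici.mpr (ENNReal.toReal_nonneg (a := S))) ENNReal.toReal_nonneg
      rwa [hgen.at_zero] at this
    have heval : evalPsi ψ S = ψ S.toReal := by simp [evalPsi, hS]
    rw [heval]
    have hfin : φ (ψ S.toReal) ≠ ∞ := hgen.phi_finite _ ht0
    have h2 := hgen.psi_phi _ ht0 ht1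
    rw [evalPsi, if_neg hfin] at h2
    have hinj : (φ (ψ S.toReal)).toReal = S.toReal := by
      by_contra hne
      rcases lt_or_gt_of_ne hne with h | h
      · have := hgen.strict_anti _ _ ENNReal.toReal_nonneg h
          (hstrict _ ENNReal.toReal_nonneg)
        rw [h2] at this
        exact lt_irrefl _ this
      · have := hgen.strict_anti _ _ ENNReal.toReal_nonneg h
          (hstrict _ ENNReal.toReal_nonneg)
        rw [h2] at this
        exact lt_irrefl _ this
    exact (ENNReal.toReal_eq_toReal_iff' hfin hS).mp hinj

/-- Consolidation preserves the generator-sum. -/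
lemma consolidate_sum {k : ℕ} (d : ℕ) (ψ : ℝ → ℝ) (φ : ℝ → ℝ≥0∞)
    (hgen : IsGenerator d ψ φ) (hstrict : ∀ z : ℝ, 0 ≤ z → 0 < ψ z)
    (y : Fin k → ℝ) (r : ℕ) (hr : r < k) :
    ∑ j, φ (consolidate ψ φ y r j) = ∑ j, φ (y j) := by
  set S := ∑ j' ∈ Finset.univ.filter (fun j' : Fin k => r ≤ (j' : ℕ)), φ (y j') with hSdef
  rw [← Finset.sum_filter_add_sum_filter_not Finset.univ (fun j : Fin k => (j : ℕ) < r)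
      (fun j => φ (consolidate ψ φ y r j)),
    ← Finset.sum_filter_add_sum_filter_not Finset.univ (fun j : Fin k => (j : ℕ) < r)
      (fun j => φ (y j))]
  congr 1
  · refine Finset.sum_congr rfl fun j hj => ?_
    simp only [Finset.mem_filter] at hj
    simp [consolidate, hj.2]
  · have hmem : (⟨r, hr⟩ : Fin k) ∈
        Finset.univ.filter (fun j : Fin k => ¬ (j : ℕ) < r) := by simp
    rw [Finset.sum_eq_single_of_mem _ hmem]
    · have hc : consolidate ψ φ y r ⟨r, hr⟩ = evalPsi ψ S := by
        simp [consolidate, hSdef]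
      rw [hc, phi_evalPsi d ψ φ hgen hstrict, hSdef]
      apply Finset.sum_congr _ (fun _ _ => rfl)
      ext j
      simp [not_lt]
    · intro j hjmem hjne
      simp only [Finset.mem_filter, not_lt] at hjmem
      have hne : (j : ℕ) ≠ r := fun h => hjne (Fin.ext h)
      have hc : consolidate ψ φ y r j = 1 := by
        simp [consolidate, not_lt.mpr hjmem.2, hne]
      rw [hc, hgen.phi_one]

/-- **Lemma 6.1** (consolidation of coordinates in Markov kernels of strict Archimedean
copulas). If `C` is a strict `d`-dimensional Archimedean copula with generator `ψ`
(strictness: `ψ > 0` on `[0,∞)`), `ℓ ∈ {1,…,d-1}`, `x ∈ [0,1]^ℓ` with `min(x) ∈ (0,1)`,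
and `y_{ℓ+1},…,y_d ∈ [0,1]`, then any (lower) sub-block of the coordinates `y_j` may be
consolidated via the corresponding marginal Archimedean copula without changing the
value of the `ℓ`-Markov kernel; in particular
`K_C(x, [0,y_{ℓ+1}]×⋯×[0,y_d]) = K_C(x, [0, C^{ℓ+1:d}(y_{ℓ+1},…,y_d)]×[0,1]^{d-ℓ-1})`
(the case `r = 0`) and
`K_C(x,[0,y_{ℓ+1}]×[0,C^{ℓ+2:d}(y_{ℓ+2},…,y_d)]×[0,1]^{d-ℓ-2})` (the case `r = 1`). -/
theorem arch_kernel_consolidation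
    (d l : ℕ) (hd : 2 ≤ d) (hl1 : 1 ≤ l) (hl2 : l ≤ d - 1)
    (ψ : ℝ → ℝ) (φ : ℝ → ℝ≥0∞) (hgen : IsGenerator d ψ φ)
    (hstrict : ∀ z : ℝ, 0 ≤ z → 0 < ψ z)
    (x : Fin l → ℝ) (hx0 : ∀ i, 0 < x i ∧ x i ≤ 1) (hx1 : ∃ i, x i < 1)
    (y : Fin (d - l) → ℝ) (hy : ∀ j, y j ∈ Icc (0:ℝ) 1) :
    ∀ r : ℕ, r < d - l →
      archK d l ψ φ x y = archK d l ψ φ x (consolidate ψ φ y r) := by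
  intro r hr
  have hsum := consolidate_sum d ψ φ hgen hstrict y r hr
  unfold archK
  rw [hsum]
end
end

section
/- Let C be a strict d-dimensional Archimedean copula and ℓ ∈ {1,…,d−2}. For any x ∈ (0,1)^ℓ, the conditional copula Cˣ of C is a (d−ℓ)-dimensional Archimedean copula; i.e. there exists a (d−ℓ)-monotone generator generating Cˣ. (In particular Cˣ is associative and satisfies Cˣ(u,…,u) < u for all u ∈ (0,1).) -/
open MeasureTheory ProbabilityTheory Set Filter Topology
open scoped ENNReal

noncomputable section
attribute [local instance] Classical.propDecidable

/-- `η` is a `k`-monotone Archimedean generator with (real-valued) pseudoinverse `ξ`. -/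
structure IsRealGenerator (k : ℕ) (η ξ : ℝ → ℝ) : Prop where
  continuousOn : ContinuousOn η (Ici 0)
  at_zero : η 0 = 1
  tendsto_zero : Tendsto η atTop (nhds 0)
  nonneg : ∀ z : ℝ, 0 ≤ z → 0 ≤ η z
  antitoneOn : AntitoneOn η (Ici 0)
  strict_anti : ∀ z₁ z₂ : ℝ, 0 ≤ z₁ → z₁ < z₂ → 0 < η z₂ → η z₂ < η z₁
  smooth : ∀ z : ℝ, 0 < z → ContDiffAt ℝ ((k - 2 : ℕ) : ℕ∞) η z
  alt_sign : ∀ m : ℕ, m ≤ k - 2 → ∀ z : ℝ, 0 < z → 0 ≤ (-1 : ℝ) ^ m * iteratedDeriv m η z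
  top_antitone : AntitoneOn (fun z => (-1 : ℝ) ^ (k - 2) * iteratedDeriv (k - 2) η z) (Ioi 0)
  top_convex : ConvexOn ℝ (Ioi 0) (fun z => (-1 : ℝ) ^ (k - 2) * iteratedDeriv (k - 2) η z)
  xi_nonneg : ∀ t : ℝ, 0 < t → t ≤ 1 → 0 ≤ ξ t
  eta_xi : ∀ t : ℝ, 0 < t → t ≤ 1 → η (ξ t) = t

/-- `ψ` is a strict `d`-monotone Archimedean generator with pseudoinverse `φ`
(strictness: `φ(0) = ∞`, equivalently `ψ > 0` on `[0,∞)` and `φ ∘ ψ = id` there). -/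
def IsStrictGenerator (d : ℕ) (ψ φ : ℝ → ℝ) : Prop :=
  IsRealGenerator d ψ φ ∧ (∀ z : ℝ, 0 ≤ z → 0 < ψ z) ∧ (∀ z : ℝ, 0 ≤ z → φ (ψ z) = z)

/-- The pseudoinverse `ξ(t) = inf{z ≥ 0 : η(z) ≤ t}` of a generator `η`. -/
def pseudoInv (η : ℝ → ℝ) (t : ℝ) : ℝ := sInf {z | 0 ≤ z ∧ η z ≤ t}

/-- The conditional Archimedean generator
`ψˣ(z) = ψ^{(ℓ)}(Σᵢ φ(xᵢ) + z) / ψ^{(ℓ)}(Σᵢ φ(xᵢ))`. -/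
def psiX (ψ φ : ℝ → ℝ) {l : ℕ} (x : Fin l → ℝ) (z : ℝ) : ℝ :=
  iteratedDeriv l ψ ((∑ i, φ (x i)) + z) / iteratedDeriv l ψ (∑ i, φ (x i))

/-- The common univariate marginal `g_x(y) = K_C(x, [0,y] × [0,1]^{d-ℓ-1})`
of the conditional distribution `K_C(x,·)` of a strict Archimedean copula; explicitly
`g_x(y) = ψ^{(ℓ)}(Σᵢ φ(xᵢ) + φ(y)) / ψ^{(ℓ)}(Σᵢ φ(xᵢ))` for `y ∈ (0,1]` and
`g_x(y) = 0` for `y ≤ 0`. -/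
def gxF (ψ φ : ℝ → ℝ) {l : ℕ} (x : Fin l → ℝ) (y : ℝ) : ℝ :=
  if y ≤ 0 then 0
  else iteratedDeriv l ψ ((∑ i, φ (x i)) + φ y) / iteratedDeriv l ψ (∑ i, φ (x i))

/-- The `ℓ`-Markov kernel of a strict `d`-dimensional Archimedean copula on the box
`[0,y]`: `K_C(x,[0,y]) = ψ^{(ℓ)}(Σᵢ φ(xᵢ) + Σⱼ φ(yⱼ)) / ψ^{(ℓ)}(Σᵢ φ(xᵢ))`
(equal to `0` whenever some `yⱼ = 0`). -/
def archKR (ψ φ : ℝ → ℝ) {l k : ℕ} (x : Fin l → ℝ) (y : Fin k → ℝ) : ℝ :=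
  if ∃ j, y j ≤ 0 then 0
  else iteratedDeriv l ψ ((∑ i, φ (x i)) + ∑ j, φ (y j)) / iteratedDeriv l ψ (∑ i, φ (x i))

/-- The conditional copula `Cˣ` of a strict Archimedean copula:
`Cˣ(u) = ψˣ(Σⱼ (ψˣ)⁻¹(uⱼ))` where `ψˣ` is the conditional generator (with the
convention `Cˣ(u) = 0` if some coordinate of `u` is `0`). -/
def condCop (ψ φ : ℝ → ℝ) {l : ℕ} (x : Fin l → ℝ) {k : ℕ} (u : Fin k → ℝ) : ℝ :=
  if ∃ j, u j ≤ 0 then 0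
  else psiX ψ φ x (∑ j, pseudoInv (psiX ψ φ x) (u j))

/-- The copula function of the Archimedean copula generated by `ψ`:
`C(x) = ψ(Σᵢ φ(xᵢ))` (with the convention `C(x) = 0` if some coordinate is `0`). -/
def archCopF (ψ φ : ℝ → ℝ) {k : ℕ} (x : Fin k → ℝ) : ℝ :=
  if ∃ i, x i ≤ 0 then 0 else ψ (∑ i, φ (x i))

/-! ### Auxiliary machinery -/

/-- alternating-sign iterated derivative -/
def Fd (ψ : ℝ → ℝ) (m : ℕ) (z : ℝ) : ℝ := (-1 : ℝ) ^ m * iteratedDeriv m ψ z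

section Aux
variable {ψ : ℝ → ℝ} {n : ℕ}

lemma aux_contDiffOn_iter (hsm : ContDiffOn ℝ (n : ℕ∞) ψ (Ioi 0)) {j : ℕ} (hj : j ≤ n) :
    ContDiffOn ℝ ((n - j : ℕ) : ℕ∞) (iteratedDeriv j ψ) (Ioi 0) := by
  induction j with
  | zero => simpa using hsm
  | succ j ih =>
      rw [iteratedDeriv_succ]
      refine (ih (by omega)).deriv_of_isOpen isOpen_Ioi ?_
      have h : (n - (j+1)) + 1 = n - j := by omega
      exact_mod_cast h.le

lemma aux_hasDerivAt_iter (hsm : ContDiffOn ℝ (n : ℕ∞) ψ (Ioi 0)) {j : ℕ} (hj : j + 1 ≤ n)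
    {z : ℝ} (hz : 0 < z) :
    HasDerivAt (iteratedDeriv j ψ) (iteratedDeriv (j+1) ψ z) z := by
  have h1 := aux_contDiffOn_iter hsm (show j ≤ n by omega)
  have h2 : DifferentiableOn ℝ (iteratedDeriv j ψ) (Ioi 0) :=
    h1.differentiableOn (by exact_mod_cast (show n - j ≠ 0 by omega))
  have h3 := (h2.differentiableAt (Ioi_mem_nhds hz)).hasDerivAt
  rw [iteratedDeriv_succ]
  exact h3

lemma aux_cont_iter (hsm : ContDiffOn ℝ (n : ℕ∞) ψ (Ioi 0)) {j : ℕ} (hj : j ≤ n) :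
    ContinuousOn (iteratedDeriv j ψ) (Ioi 0) :=
  (aux_contDiffOn_iter hsm hj).continuousOn

lemma Fd_hasDerivAt (hsm : ContDiffOn ℝ (n : ℕ∞) ψ (Ioi 0)) {j : ℕ} (hj : j + 1 ≤ n)
    {z : ℝ} (hz : 0 < z) : HasDerivAt (Fd ψ j) (-(Fd ψ (j+1) z)) z := by
  have h := (aux_hasDerivAt_iter hsm hj hz).const_mul ((-1 : ℝ)^j)
  have hval : -(Fd ψ (j+1) z) = (-1 : ℝ)^j * iteratedDeriv (j+1) ψ z := by
    unfold Fd; rw [pow_succ]; ring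
  rw [hval]
  exact h

lemma Fd_cont (hsm : ContDiffOn ℝ (n : ℕ∞) ψ (Ioi 0)) {j : ℕ} (hj : j ≤ n) :
    ContinuousOn (Fd ψ j) (Ioi 0) :=
  continuousOn_const.mul (aux_cont_iter hsm hj)

lemma Fd_anti (hsm : ContDiffOn ℝ (n : ℕ∞) ψ (Ioi 0))
    (hsign : ∀ m, m ≤ n → ∀ z, 0 < z → 0 ≤ Fd ψ m z)
    (htopa : AntitoneOn (Fd ψ n) (Ioi 0)) {m : ℕ} (hm : m ≤ n) :
    AntitoneOn (Fd ψ m) (Ioi 0) := by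
  rcases eq_or_lt_of_le hm with rfl | hlt
  · exact htopa
  · refine antitoneOn_of_deriv_nonpos (convex_Ioi 0) (Fd_cont hsm hm) ?_ ?_
    · rw [interior_Ioi]
      intro z hz
      exact ((Fd_hasDerivAt hsm (by omega) hz).differentiableAt).differentiableWithinAt
    · rw [interior_Ioi]
      intro z hz
      rw [(Fd_hasDerivAt hsm (by omega) hz).deriv]
      have := hsign (m+1) (by omega) z hz
      linarith

lemma Fd_tendsto (hsm : ContDiffOn ℝ (n : ℕ∞) ψ (Ioi 0))
    (hsign : ∀ m, m ≤ n → ∀ z, 0 < z → 0 ≤ Fd ψ m z)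
    (htopa : AntitoneOn (Fd ψ n) (Ioi 0))
    (hψtend : Tendsto ψ atTop (nhds 0)) {m : ℕ} (hm : m ≤ n) :
    Tendsto (Fd ψ m) atTop (nhds 0) := by
  rcases m with _ | j
  · have : Fd ψ 0 = ψ := by funext z; simp [Fd]
    rwa [this]
  · set f : ℝ → ℝ := fun z => Fd ψ (j+1) (max z 1) with hf
    have hanti := Fd_anti hsm hsign htopa hm
    have hfa : Antitone f := by
      intro a b hab
      exact hanti (by simp [lt_max_iff] : (max a 1 : ℝ) ∈ Ioi 0)
        (by simp [lt_max_iff] : (max b 1 : ℝ) ∈ Ioi 0) (max_le_max hab le_rfl)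
    have hfnn : ∀ z, 0 ≤ f z := fun z => hsign (j+1) hm _ (by simp [lt_max_iff])
    have hbdd : BddBelow (Set.range f) := ⟨0, fun w ⟨z, hz⟩ => hz ▸ hfnn z⟩
    set L := ⨅ z, f z with hL
    have htend : Tendsto f atTop (nhds L) := tendsto_atTop_ciInf hfa hbdd
    have heq : f =ᶠ[atTop] Fd ψ (j+1) := by
      filter_upwards [eventually_ge_atTop (1:ℝ)] with z hz
      simp [hf, max_eq_left hz]
    have htend' : Tendsto (Fd ψ (j+1)) atTop (nhds L) := htend.congr' heq
    have hLnn : 0 ≤ L := le_ciInf hfnn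
    rcases eq_or_lt_of_le hLnn with hL0 | hLpos
    · rwa [← hL0] at htend'
    · exfalso
      have hge : ∀ z, 1 ≤ z → L ≤ Fd ψ (j+1) z := by
        intro z hz
        have h5 : L ≤ f z := ciInf_le hbdd z
        have h6 : f z = Fd ψ (j+1) z := by simp [hf, max_eq_left hz]
        rwa [h6] at h5
      have hD : ∀ z : ℝ, 1 < z → HasDerivAt (fun w => Fd ψ j w + L * w) (-(Fd ψ (j+1) z) + L) z := by
        intro z hz
        have h4 : HasDerivAt (fun w : ℝ => L * w) L z := by
          simpa using (hasDerivAt_id z).const_mul L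
        exact (Fd_hasDerivAt hsm hm (by linarith)).add h4
      have hganti : AntitoneOn (fun z => Fd ψ j z + L * z) (Ici 1) := by
        refine antitoneOn_of_deriv_nonpos (convex_Ici 1) ?_ ?_ ?_
        · exact ((Fd_cont hsm (by omega)).mono (fun z (hz : (1:ℝ) ≤ z) => show (0:ℝ) < z from lt_of_lt_of_le one_pos hz)).add
            (continuousOn_const.mul continuousOn_id)
        · rw [interior_Ici]
          intro z hz
          exact ((hD z hz).differentiableAt).differentiableWithinAt
        · rw [interior_Ici]
          intro z hz
          rw [(hD z hz).deriv]
          have := hge z (le_of_lt hz)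
          linarith
      set z₀ : ℝ := max 1 ((Fd ψ j 1 + L + 1)/L) with hz₀
      have hz₀1 : (1:ℝ) ≤ z₀ := le_max_left _ _
      have h1 := hganti (self_mem_Ici) (mem_Ici.2 hz₀1) hz₀1
      have h2 : 0 ≤ Fd ψ j z₀ := hsign j (by omega) z₀ (by linarith)
      have h3 : (Fd ψ j 1 + L + 1) ≤ L * z₀ := by
        have : (Fd ψ j 1 + L + 1)/L ≤ z₀ := le_max_right _ _
        calc Fd ψ j 1 + L + 1 = L * ((Fd ψ j 1 + L + 1)/L) := by field_simp
        _ ≤ L * z₀ := by nlinarith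
      simp only [mul_one] at h1
      linarith

lemma Fd_pos (hsm : ContDiffOn ℝ (n : ℕ∞) ψ (Ioi 0))
    (hsign : ∀ m, m ≤ n → ∀ z, 0 < z → 0 ≤ Fd ψ m z)
    (htopa : AntitoneOn (Fd ψ n) (Ioi 0))
    (hψtend : Tendsto ψ atTop (nhds 0))
    (hψpos : ∀ z : ℝ, 0 ≤ z → 0 < ψ z) {m : ℕ} (hm : m ≤ n) :
    ∀ z, 0 < z → 0 < Fd ψ m z := by
  induction m with
  | zero => intro z hz; simpa [Fd] using hψpos z hz.le
  | succ j ih =>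
      intro z hz
      by_contra hle
      push_neg at hle
      have hz0 : Fd ψ (j+1) z = 0 := le_antisymm hle (hsign _ hm _ hz)
      have hvanish : ∀ w, z ≤ w → Fd ψ (j+1) w = 0 := by
        intro w hw
        refine le_antisymm ?_ (hsign _ hm _ (by linarith))
        rw [← hz0]
        rcases eq_or_lt_of_le hw with rfl | hlt
        · exact le_rfl
        · exact Fd_anti hsm hsign htopa hm hz (mem_Ioi.2 (by linarith)) hw
      have hconst : ∀ w, z ≤ w → Fd ψ j w = Fd ψ j z := by
        intro w hw
        have hderiv0 : ∀ u ∈ interior (Ici z), deriv (Fd ψ j) u = 0 := by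
          rw [interior_Ici]
          intro u hu
          rw [(Fd_hasDerivAt hsm hm (by linarith [mem_Ioi.1 hu])).deriv,
            hvanish u (le_of_lt hu), neg_zero]
        have hcont : ContinuousOn (Fd ψ j) (Ici z) :=
          (Fd_cont hsm (by omega)).mono (fun u hu => lt_of_lt_of_le hz hu)
        have hdiff : DifferentiableOn ℝ (Fd ψ j) (interior (Ici z)) := by
          rw [interior_Ici]
          intro u hu
          exact ((Fd_hasDerivAt hsm hm
            (by linarith [mem_Ioi.1 hu])).differentiableAt).differentiableWithinAt
        have ha : AntitoneOn (Fd ψ j) (Ici z) :=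
          antitoneOn_of_deriv_nonpos (convex_Ici z) hcont hdiff (fun u hu => (hderiv0 u hu).le)
        have hb : MonotoneOn (Fd ψ j) (Ici z) :=
          monotoneOn_of_deriv_nonneg (convex_Ici z) hcont hdiff (fun u hu => (hderiv0 u hu).ge)
        exact le_antisymm (ha self_mem_Ici (mem_Ici.2 hw) hw) (hb self_mem_Ici (mem_Ici.2 hw) hw)
      have hjpos : 0 < Fd ψ j z := ih (by omega) z hz
      have htendj : Tendsto (Fd ψ j) atTop (nhds 0) := Fd_tendsto hsm hsign htopa hψtend (by omega)
      have hconsttend : Tendsto (Fd ψ j) atTop (nhds (Fd ψ j z)) := by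
        refine tendsto_const_nhds.congr' ?_
        filter_upwards [eventually_ge_atTop z] with w hw
        exact (hconst w hw).symm
      have := tendsto_nhds_unique htendj hconsttend
      linarith

lemma Fd_strictAnti (hsm : ContDiffOn ℝ (n : ℕ∞) ψ (Ioi 0))
    (hsign : ∀ m, m ≤ n → ∀ z, 0 < z → 0 ≤ Fd ψ m z)
    (htopa : AntitoneOn (Fd ψ n) (Ioi 0))
    (htopc : ConvexOn ℝ (Ioi 0) (Fd ψ n))
    (hψtend : Tendsto ψ atTop (nhds 0))
    (hψpos : ∀ z : ℝ, 0 ≤ z → 0 < ψ z) {m : ℕ} (hm : m ≤ n) :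
    StrictAntiOn (Fd ψ m) (Ioi 0) := by
  rcases eq_or_lt_of_le hm with rfl | hlt
  · intro z1 h1 z2 h2 h12
    rcases lt_or_ge (Fd ψ m z2) (Fd ψ m z1) with h | h
    · exact h
    · exfalso
      have hle : Fd ψ m z2 ≤ Fd ψ m z1 := Fd_anti hsm hsign htopa hm h1 h2 h12.le
      have heq : Fd ψ m z2 = Fd ψ m z1 := le_antisymm hle h
      have hpos2 : 0 < Fd ψ m z2 := Fd_pos hsm hsign htopa hψtend hψpos hm z2 (mem_Ioi.1 h2)
      have hbig : ∀ z, z2 < z → Fd ψ m z2 ≤ Fd ψ m z := by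
        intro z hz
        have hz1z : z1 < z := lt_trans h12 hz
        have hden : 0 < z - z1 := by linarith [mem_Ioi.1 h1]
        have ha0 : (0:ℝ) ≤ (z - z2)/(z - z1) := div_nonneg (by linarith) hden.le
        have hb0 : (0:ℝ) ≤ (z2 - z1)/(z - z1) := div_nonneg (by linarith) hden.le
        have hab : (z - z2)/(z - z1) + (z2 - z1)/(z - z1) = 1 := by field_simp; ring
        have hconv := htopc.2 h1 (mem_Ioi.2 (lt_trans (mem_Ioi.1 h2) hz)) ha0 hb0 hab
        have hpt : ((z - z2)/(z - z1)) • z1 + ((z2 - z1)/(z - z1)) • z = z2 := by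
          rw [smul_eq_mul, smul_eq_mul]
          field_simp
          ring
        rw [hpt, heq] at hconv
        rw [smul_eq_mul, smul_eq_mul] at hconv
        have hbpos : (0:ℝ) < (z2 - z1)/(z - z1) := div_pos (by linarith) hden
        have hkey : ((z2 - z1)/(z - z1)) * Fd ψ m z2 ≤ ((z2 - z1)/(z - z1)) * Fd ψ m z := by
          nlinarith [hconv, hab]
        exact le_of_mul_le_mul_left hkey hbpos
      have hev := (Fd_tendsto hsm hsign htopa hψtend hm).eventually_lt_const hpos2
      rcases (hev.and (eventually_gt_atTop z2)).exists with ⟨z, hzlt, hzgt⟩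
      linarith [hbig z hzgt]
  · refine strictAntiOn_of_deriv_neg (convex_Ioi 0) (Fd_cont hsm hm) ?_
    rw [interior_Ioi]
    intro z hz
    rw [(Fd_hasDerivAt hsm (by omega) hz).deriv]
    have := Fd_pos hsm hsign htopa hψtend hψpos (show m+1 ≤ n by omega) z hz
    linarith

end Aux

lemma sum_assoc_reindex (k r : ℕ) (hk : 2 ≤ k) (hr : r < k) (w : ℕ → ℝ) :
    (∑ i : Fin k, (if (i:ℕ) < r then w i else if (i:ℕ) = r then (∑ j : Fin k, w (r + (j:ℕ)))
      else w ((i:ℕ) + k - 1))) = ∑ m ∈ Finset.range (2*k-1), w m := by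
  rw [Fin.sum_univ_eq_sum_range (fun i => if i < r then w i
    else if i = r then (∑ j : Fin k, w (r + (j:ℕ))) else w (i + k - 1)) k]
  rw [Fin.sum_univ_eq_sum_range (fun j => w (r + j)) k]
  rw [Finset.range_eq_Ico, ← Finset.sum_Ico_consecutive _ (Nat.zero_le r) hr.le]
  rw [Finset.sum_eq_sum_Ico_succ_bot hr]
  have h1 : ∀ i ∈ Finset.Ico 0 r, (if i < r then w i
      else if i = r then (∑ j ∈ Finset.Ico 0 k, w (r + j)) else w (i + k - 1)) = w i := by
    intro i hi
    rw [if_pos (Finset.mem_Ico.1 hi).2]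
  rw [Finset.sum_congr rfl h1]
  have h2 : (if r < r then w r else if r = r then (∑ j ∈ Finset.Ico 0 k, w (r + j))
      else w (r + k - 1)) = ∑ m ∈ Finset.Ico r (r+k), w m := by
    rw [if_neg (lt_irrefl r), if_pos rfl]
    symm
    rw [Finset.sum_Ico_eq_sum_range]
    have hcr : r + k - r = k := by omega
    rw [hcr, Finset.range_eq_Ico]
  rw [h2]
  have h3 : ∀ i ∈ Finset.Ico (r+1) k, (if i < r then w i
      else if i = r then (∑ j ∈ Finset.Ico 0 k, w (r + j)) else w (i + k - 1)) = w (i + k - 1) := by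
    intro i hi
    have := (Finset.mem_Ico.1 hi).1
    rw [if_neg (by omega), if_neg (by omega)]
  rw [Finset.sum_congr rfl h3]
  have h4 : (∑ i ∈ Finset.Ico (r+1) k, w (i + k - 1)) = ∑ m ∈ Finset.Ico (r+k) (2*k-1), w m := by
    rw [Finset.sum_Ico_eq_sum_range, Finset.sum_Ico_eq_sum_range]
    have hcard : k - (r+1) = 2*k-1 - (r+k) := by omega
    rw [hcard]
    refine Finset.sum_congr rfl ?_
    intro i _
    congr 1
    omega
  rw [h4]
  rw [Finset.sum_Ico_consecutive w (show r ≤ r+k by omega) (show r+k ≤ 2*k-1 by omega)]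
  rw [Finset.sum_Ico_consecutive w (Nat.zero_le r) (show r ≤ 2*k-1 by omega)]
  rw [Finset.range_eq_Ico]

/-- **Proposition 6.2** (truncation invariance). Let `C` be a strict `d`-dimensional
Archimedean copula and `ℓ ∈ {1,…,d-2}`. For any `x ∈ (0,1)^ℓ`, the conditional copula
`Cˣ` of `C` (characterized by `K_C(x,[0,y₁]×⋯×[0,y_{d-ℓ}]) = Cˣ(g_x(y₁),…,g_x(y_{d-ℓ}))`)
is a `(d-ℓ)`-dimensional Archimedean copula, i.e. it is generated by a `(d-ℓ)`-monotone
generator; in particular `Cˣ` is associative and satisfies `Cˣ(u,…,u) < u` for all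
`u ∈ (0,1)`. -/
theorem conditional_copula_is_archimedean
    (d l : ℕ) (hd : 2 ≤ d) (hl1 : 1 ≤ l) (hl2 : l ≤ d - 2)
    (ψ φ : ℝ → ℝ) (hgen : IsStrictGenerator d ψ φ)
    (x : Fin l → ℝ) (hx : ∀ i, x i ∈ Ioo (0:ℝ) 1)
    (Cx : (Fin (d - l) → ℝ) → ℝ)
    (hCx : ∀ y : Fin (d - l) → ℝ, (∀ j, y j ∈ Icc (0:ℝ) 1) →
      archKR ψ φ x y = Cx (fun j => gxF ψ φ x (y j))) :
    (∃ η ξ : ℝ → ℝ, IsRealGenerator (d - l) η ξ ∧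
      ∀ u : Fin (d - l) → ℝ, (∀ j, u j ∈ Ioc (0:ℝ) 1) → Cx u = η (∑ j, ξ (u j))) ∧
    (∀ u : ℕ → ℝ, (∀ i, i < 2 * (d - l) - 1 → u i ∈ Icc (0:ℝ) 1) →
      ∀ r : ℕ, r < d - l →
        Cx (fun i : Fin (d - l) =>
            if (i : ℕ) < r then u i
            else if (i : ℕ) = r then Cx (fun j : Fin (d - l) => u (r + (j : ℕ)))
            else u ((i : ℕ) + (d - l) - 1))
          = Cx (fun i : Fin (d - l) =>
            if (i : ℕ) = 0 then Cx (fun j : Fin (d - l) => u (j : ℕ))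
            else u ((i : ℕ) + (d - l) - 1))) ∧
    (∀ t ∈ Ioo (0:ℝ) 1, Cx (fun _ => t) < t) := by
  obtain ⟨G, hψpos, hφψ⟩ := hgen
  have hd3 : 3 ≤ d := by omega
  have hk2 : 2 ≤ d - l := by omega
  have hln : l ≤ d - 2 := hl2
  have hsm : ContDiffOn ℝ ((d-2 : ℕ) : ℕ∞) ψ (Ioi 0) :=
    fun z hz => (G.smooth z hz).contDiffWithinAt
  have hsign : ∀ m, m ≤ d-2 → ∀ z, 0 < z → 0 ≤ Fd ψ m z :=
    fun m hm z hz => G.alt_sign m hm z hz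
  have htopa : AntitoneOn (Fd ψ (d-2)) (Ioi 0) := G.top_antitone
  have htopc : ConvexOn ℝ (Ioi 0) (Fd ψ (d-2)) := G.top_convex
  have hψtend := G.tendsto_zero
  -- positivity of the sum s
  have hφx : ∀ i, 0 < φ (x i) := by
    intro i
    have h0 : 0 ≤ φ (x i) := G.xi_nonneg _ (hx i).1 (hx i).2.le
    rcases eq_or_lt_of_le h0 with heq | h
    · exfalso
      have hexi := G.eta_xi (x i) (hx i).1 (hx i).2.le
      rw [← heq, G.at_zero] at hexi
      linarith [(hx i).2]
    · exact h
  have hs : 0 < ∑ i, φ (x i) :=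
    Finset.sum_pos (fun i _ => hφx i) ⟨⟨0, hl1⟩, Finset.mem_univ _⟩
  have hFls : 0 < Fd ψ l (∑ i, φ (x i)) := Fd_pos hsm hsign htopa hψtend hψpos hln _ hs
  have hc : iteratedDeriv l ψ (∑ i, φ (x i)) ≠ 0 := by
    intro h0
    have h1 := hFls
    unfold Fd at h1
    rw [h0, mul_zero] at h1
    exact lt_irrefl 0 h1
  set η : ℝ → ℝ := psiX ψ φ x with hη_def
  set ξ : ℝ → ℝ := pseudoInv (psiX ψ φ x) with hξ_def
  have heta : ∀ z : ℝ, η z =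
      iteratedDeriv l ψ ((∑ i, φ (x i)) + z) / iteratedDeriv l ψ (∑ i, φ (x i)) :=
    fun z => rfl
  have hetaF : ∀ z : ℝ, η z = Fd ψ l ((∑ i, φ (x i)) + z) / Fd ψ l (∑ i, φ (x i)) := by
    intro z
    rw [heta z]
    unfold Fd
    rw [mul_div_mul_left _ _ (pow_ne_zero l (by norm_num : (-1:ℝ) ≠ 0))]
  have heta_pos : ∀ z : ℝ, 0 ≤ z → 0 < η z := by
    intro z hz
    rw [hetaF]
    exact div_pos (Fd_pos hsm hsign htopa hψtend hψpos hln _ (by linarith)) hFls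
  have heta_one : η 0 = 1 := by rw [heta, add_zero, div_self hc]
  have heta_anti : AntitoneOn η (Ici 0) := by
    intro z1 h1 z2 h2 h12
    rw [hetaF, hetaF]
    refine (div_le_div_iff_of_pos_right hFls).2 ?_
    exact Fd_anti hsm hsign htopa hln (mem_Ioi.2 (by linarith [mem_Ici.1 h1]))
      (mem_Ioi.2 (by linarith [mem_Ici.1 h2])) (by linarith)
  have heta_strict : ∀ z1 z2 : ℝ, 0 ≤ z1 → z1 < z2 → η z2 < η z1 := by
    intro z1 z2 h1 h2
    rw [hetaF, hetaF]
    refine (div_lt_div_iff_of_pos_right hFls).2 ?_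
    exact Fd_strictAnti hsm hsign htopa htopc hψtend hψpos hln
      (mem_Ioi.2 (by linarith)) (mem_Ioi.2 (by linarith)) (by linarith)
  have heta_le_one : ∀ z : ℝ, 0 ≤ z → η z ≤ 1 := by
    intro z hz
    rw [← heta_one]
    exact heta_anti self_mem_Ici (mem_Ici.2 hz) hz
  have heta_contOn : ContinuousOn η (Ici 0) := by
    have h1 : ContinuousOn (iteratedDeriv l ψ) (Ioi 0) := aux_cont_iter hsm hln
    have h2 : ContinuousOn (fun z : ℝ => iteratedDeriv l ψ ((∑ i, φ (x i)) + z)) (Ici 0) := by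
      refine h1.comp ((continuous_const.add continuous_id).continuousOn) ?_
      intro z hz
      have h6 := mem_Ici.1 hz
      exact mem_Ioi.2 (show (0:ℝ) < (∑ i, φ (x i)) + z by linarith)
    exact (h2.div_const _).congr (fun z _ => heta z)
  have heta_tend : Tendsto η atTop (nhds 0) := by
    have h1 : Tendsto (fun z : ℝ => (∑ i, φ (x i)) + z) atTop atTop :=
      tendsto_atTop_add_const_left _ _ tendsto_id
    have h2 : Tendsto (fun z : ℝ => Fd ψ l ((∑ i, φ (x i)) + z) / Fd ψ l (∑ i, φ (x i)))
        atTop (nhds 0) := by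
      have h3 := (Fd_tendsto hsm hsign htopa hψtend hln).comp h1
      simpa using h3.div_const (Fd ψ l (∑ i, φ (x i)))
    exact h2.congr (fun z => (hetaF z).symm)
  have hxiS : ∀ t : ℝ, ξ t = sInf {z : ℝ | 0 ≤ z ∧ η z ≤ t} := fun t => rfl
  have hxi_nonneg : ∀ t : ℝ, 0 ≤ ξ t := by
    intro t
    rw [hxiS]
    exact Real.sInf_nonneg (fun z hz => hz.1)
  have heta_xi : ∀ t : ℝ, 0 < t → t ≤ 1 → η (ξ t) = t := by
    intro t ht h1
    have hne : ({z : ℝ | 0 ≤ z ∧ η z ≤ t}).Nonempty := by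
      rcases ((heta_tend.eventually_lt_const ht).and (eventually_ge_atTop (0:ℝ))).exists
        with ⟨z, h2, h3⟩
      exact ⟨z, h3, h2.le⟩
    have hbdd : BddBelow {z : ℝ | 0 ≤ z ∧ η z ≤ t} := ⟨0, fun z hz => hz.1⟩
    have hclosed : IsClosed {z : ℝ | 0 ≤ z ∧ η z ≤ t} := by
      have h4 := heta_contOn.preimage_isClosed_of_isClosed isClosed_Ici (isClosed_Iic (a := t))
      have h5 : {z : ℝ | 0 ≤ z ∧ η z ≤ t} = Ici 0 ∩ η ⁻¹' (Iic t) := by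
        ext z
        simp [Set.mem_inter_iff, mem_Ici, mem_preimage, mem_Iic]
      rwa [h5]
    have hmem : ξ t ∈ {z : ℝ | 0 ≤ z ∧ η z ≤ t} := by
      rw [hxiS]
      exact hclosed.csInf_mem hne hbdd
    obtain ⟨hξ0, hξle⟩ := hmem
    have hIVT := intermediate_value_Icc' hξ0
      (heta_contOn.mono (fun z hz => hz.1 : Icc (0:ℝ) (ξ t) ⊆ Ici 0))
    have htmem : t ∈ Icc (η (ξ t)) (η 0) := ⟨hξle, by rw [heta_one]; exact h1⟩
    rcases hIVT htmem with ⟨z', hz'mem, hz'⟩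
    have hle : ξ t ≤ z' := by
      rw [hxiS]
      exact csInf_le hbdd ⟨hz'mem.1, hz'.le⟩
    have hz'eq : z' = ξ t := le_antisymm hz'mem.2 hle
    rw [← hz'eq]
    exact hz'
  have hxi_eta : ∀ z : ℝ, 0 ≤ z → ξ (η z) = z := by
    intro z hz
    rw [hxiS]
    apply le_antisymm
    · exact csInf_le ⟨0, fun w hw => hw.1⟩ ⟨hz, le_rfl⟩
    · refine le_csInf ⟨z, hz, le_rfl⟩ ?_
      intro w hw
      by_contra hlt
      push_neg at hlt
      have h6 := heta_strict w z hw.1 hlt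
      linarith [hw.2]
  -- iterated derivatives of η
  have hiter : ∀ m : ℕ, m ≤ (d-l) - 2 → ∀ z : ℝ, 0 < z →
      iteratedDeriv m η z =
        iteratedDeriv (l+m) ψ ((∑ i, φ (x i)) + z) / iteratedDeriv l ψ (∑ i, φ (x i)) := by
    intro m
    induction m with
    | zero =>
        intro _ z hz
        simp only [iteratedDeriv_zero, Nat.add_zero]
        exact heta z
    | succ m ih =>
        intro hm z hz
        rw [iteratedDeriv_succ]
        have hev : deriv (iteratedDeriv m η) z = deriv
            (fun w => iteratedDeriv (l+m) ψ ((∑ i, φ (x i)) + w)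
              / iteratedDeriv l ψ (∑ i, φ (x i))) z := by
          apply Filter.EventuallyEq.deriv_eq
          filter_upwards [Ioi_mem_nhds hz] with w hw
          exact ih (by omega) w hw
        rw [hev]
        have hD : HasDerivAt
            (fun w => iteratedDeriv (l+m) ψ ((∑ i, φ (x i)) + w)
              / iteratedDeriv l ψ (∑ i, φ (x i)))
            (iteratedDeriv (l+m+1) ψ ((∑ i, φ (x i)) + z)
              / iteratedDeriv l ψ (∑ i, φ (x i))) z := by
          have h2 : HasDerivAt (iteratedDeriv (l+m) ψ)
              (iteratedDeriv (l+m+1) ψ ((∑ i, φ (x i)) + z)) ((∑ i, φ (x i)) + z) :=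
            aux_hasDerivAt_iter hsm (by omega) (by linarith)
          have h3 : HasDerivAt (fun w : ℝ => (∑ i, φ (x i)) + w) 1 z := by
            simpa using (hasDerivAt_id z).const_add (∑ i, φ (x i))
          have h4 := HasDerivAt.comp z h2 h3
          have h5 := h4.div_const (iteratedDeriv l ψ (∑ i, φ (x i)))
          simpa [Function.comp] using h5
        rw [hD.deriv]
        have hadd : l + (m+1) = l + m + 1 := by omega
        rw [hadd]
  have hsmooth : ∀ z : ℝ, 0 < z → ContDiffAt ℝ (((d-l) - 2 : ℕ) : ℕ∞) η z := by
    intro z hz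
    have h1 : ContDiffOn ℝ (((d-2) - l : ℕ) : ℕ∞) (iteratedDeriv l ψ) (Ioi 0) :=
      aux_contDiffOn_iter hsm hln
    have h2 : ContDiffAt ℝ (((d-2) - l : ℕ) : ℕ∞) (iteratedDeriv l ψ) ((∑ i, φ (x i)) + z) :=
      h1.contDiffAt (Ioi_mem_nhds (by linarith))
    have h3 : ContDiffAt ℝ (((d-2) - l : ℕ) : ℕ∞) (fun w : ℝ => (∑ i, φ (x i)) + w) z :=
      contDiffAt_const.add contDiffAt_id
    have h4 := (h2.comp z h3).div_const (iteratedDeriv l ψ (∑ i, φ (x i)))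
    have h5 : ((d-2) - l : ℕ) = ((d-l) - 2 : ℕ) := by omega
    rw [h5] at h4
    exact h4
  have hkey : ∀ (m : ℕ), m ≤ (d-l)-2 → ∀ z : ℝ, 0 < z →
      (-1:ℝ)^m * iteratedDeriv m η z =
        Fd ψ (l+m) ((∑ i, φ (x i)) + z) / Fd ψ l (∑ i, φ (x i)) := by
    intro m hm z hz
    rw [hiter m hm z hz]
    unfold Fd
    rw [pow_add, mul_assoc, mul_div_mul_left _ _ (pow_ne_zero l (by norm_num : (-1:ℝ) ≠ 0)),
      mul_div_assoc]
  have halt : ∀ m : ℕ, m ≤ (d-l)-2 → ∀ z : ℝ, 0 < z →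
      0 ≤ (-1:ℝ)^m * iteratedDeriv m η z := by
    intro m hm z hz
    rw [hkey m hm z hz]
    exact div_nonneg (hsign (l+m) (by omega) _ (by linarith)) hFls.le
  have hln2 : l + ((d-l)-2) = d-2 := by omega
  have htopA : AntitoneOn (fun z : ℝ => (-1:ℝ)^((d-l)-2) * iteratedDeriv ((d-l)-2) η z)
      (Ioi 0) := by
    intro z1 h1 z2 h2 h12
    show (-1:ℝ)^((d-l)-2) * iteratedDeriv ((d-l)-2) η z2
      ≤ (-1:ℝ)^((d-l)-2) * iteratedDeriv ((d-l)-2) η z1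
    rw [hkey _ le_rfl z1 (mem_Ioi.1 h1), hkey _ le_rfl z2 (mem_Ioi.1 h2), hln2]
    refine (div_le_div_iff_of_pos_right hFls).2 ?_
    exact Fd_anti hsm hsign htopa le_rfl (mem_Ioi.2 (by linarith [mem_Ioi.1 h1]))
      (mem_Ioi.2 (by linarith [mem_Ioi.1 h2])) (by linarith)
  have htopC : ConvexOn ℝ (Ioi 0)
      (fun z : ℝ => (-1:ℝ)^((d-l)-2) * iteratedDeriv ((d-l)-2) η z) := by
    refine ⟨convex_Ioi 0, ?_⟩
    intro z1 h1 z2 h2 a b ha hb hab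
    have hmem : a • z1 + b • z2 ∈ Ioi 0 := (convex_Ioi 0) h1 h2 ha hb hab
    show (-1:ℝ)^((d-l)-2) * iteratedDeriv ((d-l)-2) η (a • z1 + b • z2)
      ≤ a • ((-1:ℝ)^((d-l)-2) * iteratedDeriv ((d-l)-2) η z1)
        + b • ((-1:ℝ)^((d-l)-2) * iteratedDeriv ((d-l)-2) η z2)
    rw [hkey _ le_rfl _ (mem_Ioi.1 hmem), hkey _ le_rfl _ (mem_Ioi.1 h1),
      hkey _ le_rfl _ (mem_Ioi.1 h2), hln2]
    have hpt : (∑ i, φ (x i)) + (a • z1 + b • z2) =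
        a • ((∑ i, φ (x i)) + z1) + b • ((∑ i, φ (x i)) + z2) := by
      simp only [smul_eq_mul]
      linear_combination (-(∑ i, φ (x i))) * hab
    rw [hpt]
    have hconv := htopc.2 (mem_Ioi.2 (show (0:ℝ) < (∑ i, φ (x i)) + z1 by
        linarith [mem_Ioi.1 h1]))
      (mem_Ioi.2 (show (0:ℝ) < (∑ i, φ (x i)) + z2 by linarith [mem_Ioi.1 h2])) ha hb hab
    simp only [smul_eq_mul] at hconv ⊢
    have hrw : a * (Fd ψ (d-2) ((∑ i, φ (x i)) + z1) / Fd ψ l (∑ i, φ (x i)))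
        + b * (Fd ψ (d-2) ((∑ i, φ (x i)) + z2) / Fd ψ l (∑ i, φ (x i)))
        = (a * Fd ψ (d-2) ((∑ i, φ (x i)) + z1) + b * Fd ψ (d-2) ((∑ i, φ (x i)) + z2))
          / Fd ψ l (∑ i, φ (x i)) := by ring
    rw [hrw]
    exact (div_le_div_iff_of_pos_right hFls).2 hconv
  -- the key evaluation of Cx
  have hCxVal : ∀ v : Fin (d-l) → ℝ, (∀ j, v j ∈ Icc (0:ℝ) 1) →
      Cx v = if ∃ j, v j ≤ 0 then 0 else η (∑ j, ξ (v j)) := by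
    intro v hv
    set y : Fin (d-l) → ℝ := fun j => if v j ≤ 0 then 0 else ψ (ξ (v j)) with hy_def
    have hy01 : ∀ j, y j ∈ Icc (0:ℝ) 1 := by
      intro j
      simp only [hy_def]
      by_cases h : v j ≤ 0
      · rw [if_pos h]; exact ⟨le_rfl, zero_le_one⟩
      · rw [if_neg h]
        refine ⟨(hψpos _ (hxi_nonneg _)).le, ?_⟩
        have h7 := G.antitoneOn self_mem_Ici (mem_Ici.2 (hxi_nonneg (v j))) (hxi_nonneg (v j))
        rwa [G.at_zero] at h7
    have hyval : ∀ j, gxF ψ φ x (y j) = v j := by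
      intro j
      simp only [hy_def]
      by_cases h : v j ≤ 0
      · have hv0 : v j = 0 := le_antisymm h (hv j).1
        rw [if_pos h]
        simp only [gxF]
        rw [if_pos le_rfl]
        exact hv0.symm
      · have hψx : 0 < ψ (ξ (v j)) := hψpos _ (hxi_nonneg _)
        rw [if_neg h]
        simp only [gxF]
        rw [if_neg (not_le.2 hψx), hφψ _ (hxi_nonneg (v j))]
        exact heta_xi (v j) (not_le.1 h) (hv j).2
    have h1 := hCx y hy01
    have h2 : (fun j => gxF ψ φ x (y j)) = v := funext hyval
    rw [h2] at h1
    rw [← h1]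
    by_cases hex : ∃ j, v j ≤ 0
    · rw [if_pos hex]
      obtain ⟨j, hj⟩ := hex
      have hyj : y j ≤ 0 := by simp only [hy_def]; rw [if_pos hj]
      simp only [archKR]
      rw [if_pos ⟨j, hyj⟩]
    · rw [if_neg hex]
      push_neg at hex
      have hyψ : ∀ j, y j = ψ (ξ (v j)) := by
        intro j
        simp only [hy_def]
        exact if_neg (not_le.2 (hex j))
      have hyn : ¬ ∃ j, y j ≤ 0 := by
        rintro ⟨j, hj⟩
        rw [hyψ j] at hj
        exact absurd hj (not_le.2 (hψpos _ (hxi_nonneg _)))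
      simp only [archKR]
      rw [if_neg hyn]
      have hsum : ∑ j, φ (y j) = ∑ j, ξ (v j) := by
        refine Finset.sum_congr rfl (fun j _ => ?_)
        rw [hyψ j, hφψ _ (hxi_nonneg (v j))]
      rw [hsum]
      exact (heta _).symm
  -- the associativity core computation
  have hpiece : ∀ (u : ℕ → ℝ), (∀ i, i < 2*(d-l)-1 → u i ∈ Icc (0:ℝ) 1) → ∀ r, r < d - l →
      Cx (fun i : Fin (d-l) => if (i:ℕ) < r then u i
        else if (i:ℕ) = r then Cx (fun j : Fin (d-l) => u (r + (j:ℕ)))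
        else u ((i:ℕ) + (d-l) - 1))
      = (if ∃ i, i < 2*(d-l)-1 ∧ u i ≤ 0 then 0
         else η (∑ m ∈ Finset.range (2*(d-l)-1), ξ (u m))) := by
    intro u hu r hr
    have hblock : ∀ j : Fin (d-l), u (r + (j:ℕ)) ∈ Icc (0:ℝ) 1 :=
      fun j => hu _ (by have := j.isLt; omega)
    have hinner := hCxVal (fun j => u (r + (j:ℕ))) hblock
    set A : Fin (d-l) → ℝ := fun i => if (i:ℕ) < r then u i
      else if (i:ℕ) = r then Cx (fun j : Fin (d-l) => u (r + (j:ℕ)))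
      else u ((i:ℕ) + (d-l) - 1) with hA_def
    have hAmk : ∀ (m : ℕ) (hm : m < d-l), A ⟨m, hm⟩ = (if m < r then u m
        else if m = r then Cx (fun j : Fin (d-l) => u (r + (j:ℕ)))
        else u (m + (d-l) - 1)) := fun m hm => rfl
    by_cases hz : ∃ i, i < 2*(d-l)-1 ∧ u i ≤ 0
    · rw [if_pos hz]
      obtain ⟨i0, hi0, hu0⟩ := hz
      have hA01 : ∀ i : Fin (d-l), A i ∈ Icc (0:ℝ) 1 := by
        intro i
        simp only [hA_def]
        by_cases h1 : (i:ℕ) < r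
        · rw [if_pos h1]; exact hu _ (by omega)
        · rw [if_neg h1]
          by_cases h2 : (i:ℕ) = r
          · rw [if_pos h2, hinner]
            by_cases h3 : ∃ j : Fin (d-l), u (r + (j:ℕ)) ≤ 0
            · rw [if_pos h3]; exact ⟨le_rfl, zero_le_one⟩
            · rw [if_neg h3]
              have hsnn : 0 ≤ ∑ j : Fin (d-l), ξ (u (r + (j:ℕ))) :=
                Finset.sum_nonneg (fun j _ => hxi_nonneg _)
              exact ⟨(heta_pos _ hsnn).le, heta_le_one _ hsnn⟩
          · rw [if_neg h2]; exact hu _ (by have := i.isLt; omega)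
      have hexA : ∃ i : Fin (d-l), A i ≤ 0 := by
        rcases lt_or_ge i0 r with hc1 | hc1
        · refine ⟨⟨i0, by omega⟩, ?_⟩
          rw [hAmk i0 (by omega), if_pos hc1]
          exact hu0
        · rcases lt_or_ge i0 (r + (d-l)) with hc2 | hc2
          · have hin0 : Cx (fun j : Fin (d-l) => u (r + (j:ℕ))) = 0 := by
              rw [hinner]
              refine if_pos ⟨⟨i0 - r, by omega⟩, ?_⟩
              have hgoal : u (r + (i0 - r)) ≤ 0 := by
                have hri : r + (i0 - r) = i0 := by omega
                rw [hri]; exact hu0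
              exact hgoal
            refine ⟨⟨r, hr⟩, ?_⟩
            rw [hAmk r hr, if_neg (lt_irrefl r), if_pos rfl, hin0]
          · refine ⟨⟨i0 - ((d-l) - 1), by omega⟩, ?_⟩
            rw [hAmk (i0 - ((d-l)-1)) (by omega), if_neg (by omega), if_neg (by omega)]
            have hik : (i0 - ((d-l)-1)) + (d-l) - 1 = i0 := by omega
            rw [hik]
            exact hu0
      rw [hCxVal A hA01, if_pos hexA]
    · rw [if_neg hz]
      push_neg at hz
      have hbpos : ∀ j : Fin (d-l), 0 < u (r + (j:ℕ)) :=
        fun j => hz _ (by have := j.isLt; omega)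
      have hinner' : Cx (fun j : Fin (d-l) => u (r + (j:ℕ)))
          = η (∑ j : Fin (d-l), ξ (u (r + (j:ℕ)))) := by
        rw [hinner, if_neg]
        rintro ⟨j, hj⟩
        exact absurd hj (not_le.2 (hbpos j))
      have hSnn : 0 ≤ ∑ j : Fin (d-l), ξ (u (r + (j:ℕ))) :=
        Finset.sum_nonneg (fun j _ => hxi_nonneg _)
      have hA01 : ∀ i : Fin (d-l), A i ∈ Icc (0:ℝ) 1 := by
        intro i
        simp only [hA_def]
        by_cases h1 : (i:ℕ) < r
        · rw [if_pos h1]; exact hu _ (by omega)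
        · rw [if_neg h1]
          by_cases h2 : (i:ℕ) = r
          · rw [if_pos h2, hinner']
            exact ⟨(heta_pos _ hSnn).le, heta_le_one _ hSnn⟩
          · rw [if_neg h2]; exact hu _ (by have := i.isLt; omega)
      have hApos : ∀ i : Fin (d-l), 0 < A i := by
        intro i
        simp only [hA_def]
        by_cases h1 : (i:ℕ) < r
        · rw [if_pos h1]; exact hz _ (by omega)
        · rw [if_neg h1]
          by_cases h2 : (i:ℕ) = r
          · rw [if_pos h2, hinner']
            exact heta_pos _ hSnn
          · rw [if_neg h2]; exact hz _ (by have := i.isLt; omega)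
      rw [hCxVal A hA01, if_neg (by rintro ⟨j, hj⟩; exact absurd hj (not_le.2 (hApos j)))]
      have hsum : ∑ i : Fin (d-l), ξ (A i) = ∑ i : Fin (d-l),
          (if (i:ℕ) < r then ξ (u i) else if (i:ℕ) = r
            then (∑ j : Fin (d-l), ξ (u (r + (j:ℕ)))) else ξ (u ((i:ℕ) + (d-l) - 1))) := by
        refine Finset.sum_congr rfl (fun i _ => ?_)
        simp only [hA_def]
        by_cases h1 : (i:ℕ) < r
        · rw [if_pos h1, if_pos h1]
        · rw [if_neg h1, if_neg h1]
          by_cases h2 : (i:ℕ) = r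
          · rw [if_pos h2, if_pos h2, hinner', hxi_eta _ hSnn]
          · rw [if_neg h2, if_neg h2]
      rw [hsum, sum_assoc_reindex (d-l) r hk2 hr (fun m => ξ (u m))]
  refine ⟨⟨η, ξ, ?_, ?_⟩, ?_, ?_⟩
  · exact ⟨heta_contOn, heta_one, heta_tend, fun z hz => (heta_pos z hz).le, heta_anti,
      fun z1 z2 h1 h2 _ => heta_strict z1 z2 h1 h2, hsmooth, halt, htopA, htopC,
      fun t ht h1 => hxi_nonneg t, heta_xi⟩
  · intro u hu
    rw [hCxVal u (fun j => ⟨(hu j).1.le, (hu j).2⟩), if_neg]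
    rintro ⟨j, hj⟩
    exact absurd hj (not_le.2 (hu j).1)
  · intro u hu r hr
    rw [hpiece u hu r hr]
    have h0 := hpiece u hu 0 (by omega)
    rw [← h0]
    congr 1
    funext i
    rw [if_neg (Nat.not_lt_zero _)]
    simp only [Nat.zero_add]
  · intro t ht
    have h := hCxVal (fun _ => t) (fun j => ⟨ht.1.le, ht.2.le⟩)
    rw [if_neg (by rintro ⟨j, hj⟩; exact absurd hj (not_le.2 ht.1))] at h
    rw [h]
    have hsc : ∑ _j : Fin (d-l), ξ t = ((d-l : ℕ) : ℝ) * ξ t := by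
      rw [Finset.sum_const, Finset.card_univ, Fintype.card_fin, nsmul_eq_mul]
    rw [hsc]
    have hξnn : 0 ≤ ξ t := hxi_nonneg t
    have hξpos : 0 < ξ t := by
      rcases eq_or_lt_of_le hξnn with heq | h'
      · exfalso
        have h8 := heta_xi t ht.1 ht.2.le
        rw [← heq, heta_one] at h8
        linarith [ht.2]
      · exact h'
    have hklt : ξ t < ((d-l : ℕ) : ℝ) * ξ t := by
      have h9 : (2 : ℝ) ≤ ((d-l : ℕ) : ℝ) := by exact_mod_cast hk2
      nlinarith
    have h10 := heta_strict (ξ t) (((d-l : ℕ) : ℝ) * ξ t) hξnn hklt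
    rw [heta_xi t ht.1 ht.2.le] at h10
    exact h10
end
end

section
/- Let C be a strict d-dimensional Archimedean copula with generator ψ and ℓ ∈ {1,…,d−2}, and fix x ∈ (0,1)^ℓ. Then the function ψˣ : [0,∞) → [0,1] defined by ψˣ(z) := K_C(x, [0,ψ(z)]×[0,1]^{d−ℓ−1}) = ψ^{(ℓ)}(Σ_{i=1}^ℓ φ(x_i) + z)/ψ^{(ℓ)}(Σ_{i=1}^ℓ φ(x_i)) is a (d−ℓ)-monotone Archimedean generator of the conditional copula Cˣ: ψˣ is continuous and strictly decreasing on [0,∞), ψˣ(0) = 1, lim_{z→∞} ψˣ(z) = 0, (−1)^{d−ℓ−2}(ψˣ)^{(d−ℓ−2)} is non-negative, non-increasing and convex on (0,∞), and Cˣ(u) = ψˣ(Σ_{j=1}^{d−ℓ} φˣ(u_j)) for all u ∈ [0,1]^{d−ℓ}, where φˣ is the pseudoinverse of ψˣ. -/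
open MeasureTheory ProbabilityTheory Set Filter Topology
open scoped ENNReal

noncomputable section
attribute [local instance] Classical.propDecidable

section Aux
variable {d : ℕ} {ψ φ : ℝ → ℝ}

lemma aux_contDiffOn (hgen : IsStrictGenerator d ψ φ) :
    ContDiffOn ℝ ((d - 2 : ℕ) : ℕ∞) ψ (Ioi 0) :=
  fun z hz => (hgen.1.smooth z hz).contDiffWithinAt

lemma aux_eqOn (n : ℕ) (f : ℝ → ℝ) :
    Set.EqOn (iteratedDerivWithin n f (Ioi 0)) (iteratedDeriv n f) (Ioi (0:ℝ)) := fun z hz => by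
  rw [iteratedDerivWithin_eq_iteratedFDerivWithin, iteratedDeriv_eq_iteratedFDeriv,
    iteratedFDerivWithin_of_isOpen n isOpen_Ioi hz]

lemma aux_cont (hgen : IsStrictGenerator d ψ φ) {m : ℕ} (hm : m ≤ d - 2) :
    ContinuousOn (iteratedDeriv m ψ) (Ioi 0) :=
  ((aux_contDiffOn hgen).continuousOn_iteratedDerivWithin (by exact_mod_cast hm)
    isOpen_Ioi.uniqueDiffOn).congr (aux_eqOn m ψ).symm

lemma aux_hasDerivAt (hgen : IsStrictGenerator d ψ φ) {m : ℕ} (hm : m + 1 ≤ d - 2)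
    {z : ℝ} (hz : 0 < z) :
    HasDerivAt (iteratedDeriv m ψ) (iteratedDeriv (m + 1) ψ z) z := by
  have h1 : DifferentiableWithinAt ℝ (iteratedDerivWithin m ψ (Ioi 0)) (Ioi 0) z :=
    (aux_contDiffOn hgen).differentiableOn_iteratedDerivWithin
      (by exact_mod_cast Nat.lt_of_succ_le hm) isOpen_Ioi.uniqueDiffOn z hz
  have h2 : DifferentiableAt ℝ (iteratedDerivWithin m ψ (Ioi 0)) z :=
    h1.differentiableAt (isOpen_Ioi.mem_nhds hz)
  have hdiff : DifferentiableAt ℝ (iteratedDeriv m ψ) z :=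
    h2.congr_of_eventuallyEq
      (Filter.eventuallyEq_of_mem (isOpen_Ioi.mem_nhds hz) fun w hw => (aux_eqOn m ψ hw).symm)
  have := hdiff.hasDerivAt
  rwa [iteratedDeriv_succ]

lemma aux_mvt (hgen : IsStrictGenerator d ψ φ) {m : ℕ} (hm : m + 1 ≤ d - 2) {a b : ℝ}
    (ha : 0 < a) (hab : a < b) :
    ∃ ξ ∈ Ioo a b,
      iteratedDeriv m ψ b - iteratedDeriv m ψ a = iteratedDeriv (m + 1) ψ ξ * (b - a) := by
  obtain ⟨ξ, hξ, h⟩ := exists_hasDerivAt_eq_slope (iteratedDeriv m ψ) (iteratedDeriv (m + 1) ψ)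
    hab
    (fun z hz => (aux_hasDerivAt hgen hm (lt_of_lt_of_le ha hz.1)).continuousAt.continuousWithinAt)
    (fun z hz => aux_hasDerivAt hgen hm (ha.trans hz.1))
  exact ⟨ξ, hξ, by rw [h, div_mul_cancel₀ _ (sub_ne_zero.2 hab.ne')]⟩

end Aux
lemma aux_zd (hgen : IsStrictGenerator d ψ φ) :
    ∀ m : ℕ, m + 1 ≤ d - 2 → ∀ a : ℝ, 0 < a →
      (∀ z, a ≤ z → iteratedDeriv (m + 1) ψ z = 0) → False := by
  intro m
  induction m with
  | zero =>
    intro hm a ha h0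
    have hconst : ∀ z, a ≤ z → ψ z = ψ a := by
      intro z hz
      rcases eq_or_lt_of_le hz with rfl | hz'
      · rfl
      · obtain ⟨ξ, hξ, h⟩ := aux_mvt hgen hm ha hz'
        rw [h0 ξ hξ.1.le, zero_mul, sub_eq_zero] at h
        simpa [iteratedDeriv_zero] using h
    have h1 : Tendsto ψ atTop (nhds (ψ a)) := by
      have hev : ψ =ᶠ[atTop] fun _ => ψ a := by
        filter_upwards [eventually_ge_atTop a] with z hz using hconst z hz
      exact Tendsto.congr' hev.symm tendsto_const_nhds
    exact absurd (tendsto_nhds_unique h1 hgen.1.tendsto_zero) (ne_of_gt (hgen.2.1 a ha.le))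
  | succ m ih =>
    intro hm a ha h0
    have hm' : m + 1 ≤ d - 2 := by omega
    have hconst : ∀ z, a ≤ z → iteratedDeriv (m + 1) ψ z = iteratedDeriv (m + 1) ψ a := by
      intro z hz
      rcases eq_or_lt_of_le hz with rfl | hz'
      · rfl
      · obtain ⟨ξ, hξ, h⟩ := aux_mvt hgen hm ha hz'
        rw [h0 ξ hξ.1.le, zero_mul, sub_eq_zero] at h
        exact h
    have hlin : ∀ z, a ≤ z →
        iteratedDeriv m ψ z = iteratedDeriv m ψ a + iteratedDeriv (m + 1) ψ a * (z - a) := by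
      intro z hz
      rcases eq_or_lt_of_le hz with rfl | hz'
      · ring
      · obtain ⟨ξ, hξ, h⟩ := aux_mvt hgen hm' ha hz'
        rw [hconst ξ hξ.1.le] at h
        linarith
    have hs1 : 0 ≤ (-1:ℝ) ^ (m + 1) * iteratedDeriv (m + 1) ψ a :=
      hgen.1.alt_sign (m + 1) hm' a ha
    have hs2 : 0 ≤ (-1:ℝ) ^ m * iteratedDeriv (m + 1) ψ a := by
      by_contra hneg
      push_neg at hneg
      have hcpos : 0 < -((-1:ℝ) ^ m * iteratedDeriv (m + 1) ψ a) := by linarith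
      obtain ⟨P, hP, hPdef⟩ : ∃ P : ℝ, 0 < P ∧
          (-((-1:ℝ) ^ m * iteratedDeriv (m + 1) ψ a)) * P
            = |(-1:ℝ) ^ m * iteratedDeriv m ψ a| + 1 :=
        ⟨(|(-1:ℝ) ^ m * iteratedDeriv m ψ a| + 1) / (-((-1:ℝ) ^ m * iteratedDeriv (m + 1) ψ a)),
          div_pos (by positivity) hcpos, by
            field_simp
            exact div_self (by intro h0; rw [h0, mul_zero] at hneg; exact lt_irrefl _ hneg)⟩
      have hza : a ≤ a + P := by linarith
      have h1 : 0 ≤ (-1:ℝ) ^ m * iteratedDeriv m ψ (a + P) :=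
        hgen.1.alt_sign m (by omega) (a + P) (by linarith)
      have h2 : (-1:ℝ) ^ m * iteratedDeriv m ψ (a + P)
          = (-1:ℝ) ^ m * iteratedDeriv m ψ a
            - (-((-1:ℝ) ^ m * iteratedDeriv (m + 1) ψ a)) * P := by
        rw [hlin _ hza]; ring
      have h4 := le_abs_self ((-1:ℝ) ^ m * iteratedDeriv m ψ a)
      linarith [h1, h2, hPdef, h4]
    have hv0 : iteratedDeriv (m + 1) ψ a = 0 := by
      have hid : (-1:ℝ) ^ (m + 1) * iteratedDeriv (m + 1) ψ a
          = -((-1:ℝ) ^ m * iteratedDeriv (m + 1) ψ a) := by ring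
      have h4 : (-1:ℝ) ^ m * iteratedDeriv (m + 1) ψ a = 0 := by
        rw [hid] at hs1; linarith
      rcases mul_eq_zero.mp h4 with h5 | h5
      · exact absurd h5 (pow_ne_zero _ (by norm_num))
      · exact h5
    exact ih hm' a ha fun z hz => by rw [hconst z hz, hv0]

lemma aux_lb (hgen : IsStrictGenerator d ψ φ) {m : ℕ} (hm1 : 1 ≤ m) (hm2 : m ≤ d - 2)
    {c a : ℝ} (hc : 0 < c) (ha : 0 < a)
    (h : ∀ z, a ≤ z → c ≤ (-1:ℝ) ^ m * iteratedDeriv m ψ z) : False := by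
  obtain ⟨k, rfl⟩ : ∃ k, m = k + 1 := ⟨m - 1, by omega⟩
  have hBle : ∀ w : ℝ, 0 < w → (-1:ℝ) ^ (k + 1) * iteratedDeriv k ψ w ≤ 0 := by
    intro w hw
    have h1 := hgen.1.alt_sign k (by omega) w hw
    have h2 : (-1:ℝ) ^ (k + 1) * iteratedDeriv k ψ w
        = -((-1:ℝ) ^ k * iteratedDeriv k ψ w) := by ring
    linarith
  have hBa0 : (-1:ℝ) ^ (k + 1) * iteratedDeriv k ψ a ≤ 0 := hBle a ha
  obtain ⟨P, hP, hPdef⟩ : ∃ P : ℝ, 0 < P ∧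
      c * P = 1 - (-1:ℝ) ^ (k + 1) * iteratedDeriv k ψ a :=
    ⟨(1 - (-1:ℝ) ^ (k + 1) * iteratedDeriv k ψ a) / c, div_pos (by linarith) hc, by field_simp⟩
  have hza : a < a + P := by linarith
  obtain ⟨ξ, hξ, hmv⟩ := aux_mvt hgen (show k + 1 ≤ d - 2 from hm2) ha hza
  have h2 : c ≤ (-1:ℝ) ^ (k + 1) * iteratedDeriv (k + 1) ψ ξ := h ξ hξ.1.le
  have h1 : (-1:ℝ) ^ (k + 1) * iteratedDeriv k ψ (a + P)
        - (-1:ℝ) ^ (k + 1) * iteratedDeriv k ψ a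
      = ((-1:ℝ) ^ (k + 1) * iteratedDeriv (k + 1) ψ ξ) * P := by
    rw [← mul_sub, hmv]; ring
  have h3 : c * P ≤ ((-1:ℝ) ^ (k + 1) * iteratedDeriv (k + 1) ψ ξ) * P :=
    mul_le_mul_of_nonneg_right h2 hP.le
  have h5 : (-1:ℝ) ^ (k + 1) * iteratedDeriv k ψ (a + P) ≤ 0 := hBle _ (by linarith)
  linarith

lemma aux_anti (hgen : IsStrictGenerator d ψ φ) {m : ℕ} (hm : m ≤ d - 2) :
    AntitoneOn (fun z => (-1:ℝ) ^ m * iteratedDeriv m ψ z) (Ioi 0) := by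
  rcases eq_or_lt_of_le hm with rfl | hlt
  · exact hgen.1.top_antitone
  · apply antitoneOn_of_deriv_nonpos (convex_Ioi 0)
    · exact continuousOn_const.mul (aux_cont hgen hm)
    · rw [interior_Ioi]
      exact fun z hz =>
        (((aux_hasDerivAt hgen (by omega) hz).differentiableAt).const_mul _).differentiableWithinAt
    · intro z hz
      rw [interior_Ioi] at hz
      have hd := aux_hasDerivAt hgen (show m + 1 ≤ d - 2 by omega) hz
      rw [deriv_const_mul _ hd.differentiableAt, hd.deriv]
      have h1 := hgen.1.alt_sign (m + 1) (by omega) z hz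
      have h2 : (-1:ℝ) ^ m * iteratedDeriv (m + 1) ψ z
          = -((-1:ℝ) ^ (m + 1) * iteratedDeriv (m + 1) ψ z) := by ring
      linarith

lemma aux_convex (hgen : IsStrictGenerator d ψ φ) {m : ℕ} (hm : m ≤ d - 2) :
    ConvexOn ℝ (Ioi 0) (fun z => (-1:ℝ) ^ m * iteratedDeriv m ψ z) := by
  rcases eq_or_lt_of_le hm with rfl | hlt
  · exact hgen.1.top_convex
  · apply MonotoneOn.convexOn_of_deriv (convex_Ioi 0)
    · exact continuousOn_const.mul (aux_cont hgen hm)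
    · rw [interior_Ioi]
      exact fun z hz =>
        (((aux_hasDerivAt hgen (by omega) hz).differentiableAt).const_mul _).differentiableWithinAt
    · rw [interior_Ioi]
      intro p hp q hq hpq
      have hdp := aux_hasDerivAt hgen (show m + 1 ≤ d - 2 by omega) hp
      have hdq := aux_hasDerivAt hgen (show m + 1 ≤ d - 2 by omega) hq
      rw [deriv_const_mul _ hdp.differentiableAt, hdp.deriv,
        deriv_const_mul _ hdq.differentiableAt, hdq.deriv]
      have h1 : (-1:ℝ) ^ (m + 1) * iteratedDeriv (m + 1) ψ q
          ≤ (-1:ℝ) ^ (m + 1) * iteratedDeriv (m + 1) ψ p :=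
        aux_anti hgen (by omega) hp hq hpq
      have h2 : (-1:ℝ) ^ m * iteratedDeriv (m + 1) ψ p
          = -((-1:ℝ) ^ (m + 1) * iteratedDeriv (m + 1) ψ p) := by ring
      have h3 : (-1:ℝ) ^ m * iteratedDeriv (m + 1) ψ q
          = -((-1:ℝ) ^ (m + 1) * iteratedDeriv (m + 1) ψ q) := by ring
      linarith

lemma aux_pos (hgen : IsStrictGenerator d ψ φ) {m : ℕ} (hm1 : 1 ≤ m) (hm2 : m ≤ d - 2)
    {w : ℝ} (hw : 0 < w) : 0 < (-1:ℝ) ^ m * iteratedDeriv m ψ w := by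
  rcases lt_or_eq_of_le (hgen.1.alt_sign m hm2 w hw) with h | h
  · exact h
  · exfalso
    obtain ⟨k, rfl⟩ : ∃ k, m = k + 1 := ⟨m - 1, by omega⟩
    apply aux_zd hgen k hm2 w hw
    intro z hz
    have h1 : (-1:ℝ) ^ (k + 1) * iteratedDeriv (k + 1) ψ z
        ≤ (-1:ℝ) ^ (k + 1) * iteratedDeriv (k + 1) ψ w :=
      aux_anti hgen hm2 (mem_Ioi.2 hw) (mem_Ioi.2 (lt_of_lt_of_le hw hz)) hz
    have h2 := hgen.1.alt_sign (k + 1) hm2 z (lt_of_lt_of_le hw hz)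
    have h3 : (-1:ℝ) ^ (k + 1) * iteratedDeriv (k + 1) ψ z = 0 := le_antisymm (by linarith) h2
    rcases mul_eq_zero.mp h3 with h4 | h4
    · exact absurd h4 (pow_ne_zero _ (by norm_num))
    · exact h4

lemma aux_flat {h : ℝ → ℝ} (hconv : ConvexOn ℝ (Ioi 0) h) (hanti : AntitoneOn h (Ioi 0))
    {a b : ℝ} (ha : 0 < a) (hab : a < b) (heq : h a = h b) :
    ∀ z, a ≤ z → h z = h a := by
  intro z hz
  have hza : 0 < z := lt_of_lt_of_le ha hz
  rcases le_or_gt z b with hzb | hbz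
  · have h1 : h z ≤ h a := hanti (mem_Ioi.2 ha) (mem_Ioi.2 hza) hz
    have h2 : h b ≤ h z := hanti (mem_Ioi.2 hza) (mem_Ioi.2 (ha.trans hab)) hzb
    linarith
  · have hz0 : 0 < z - a := by linarith
    set t := (z - b) / (z - a) with ht
    have ht0 : 0 ≤ t := div_nonneg (by linarith) hz0.le
    have ht1 : 0 < 1 - t := by
      have : t < 1 := (div_lt_one hz0).2 (by linarith)
      linarith
    have hcomb : t * a + (1 - t) * z = b := by
      rw [ht]
      field_simp [ht]
      ring
    have hcv := hconv.2 (mem_Ioi.2 ha) (mem_Ioi.2 hza) ht0 ht1.le (by ring)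
    rw [smul_eq_mul, smul_eq_mul, smul_eq_mul, smul_eq_mul, hcomb] at hcv
    have hlow : h a ≤ h z := by nlinarith [hcv]
    have hup : h z ≤ h b := hanti (mem_Ioi.2 (ha.trans hab)) (mem_Ioi.2 hza) hbz.le
    linarith

/-- **Lemma 6.3** (the conditional generator). Let `C` be a strict `d`-dimensional
Archimedean copula with generator `ψ`, `ℓ ∈ {1,…,d-2}`, and fix `x ∈ (0,1)^ℓ`. Then
`ψˣ(z) := K_C(x,[0,ψ(z)]×[0,1]^{d-ℓ-1}) = ψ^{(ℓ)}(Σᵢφ(xᵢ)+z)/ψ^{(ℓ)}(Σᵢφ(xᵢ))` is a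
`(d-ℓ)`-monotone Archimedean generator of the conditional copula `Cˣ`: it is continuous
and strictly decreasing on `[0,∞)`, `ψˣ(0) = 1`, `ψˣ(z) → 0` as `z → ∞`,
`(−1)^{d-ℓ-2}(ψˣ)^{(d-ℓ-2)}` is non-negative, non-increasing and convex on `(0,∞)`,
and `Cˣ(u) = ψˣ(Σⱼ φˣ(uⱼ))`, `φˣ` denoting the pseudoinverse of `ψˣ`. -/
theorem conditional_generator_properties
    (d l : ℕ) (hd : 2 ≤ d) (hl1 : 1 ≤ l) (hl2 : l ≤ d - 2)
    (ψ φ : ℝ → ℝ) (hgen : IsStrictGenerator d ψ φ)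
    (x : Fin l → ℝ) (hx : ∀ i, x i ∈ Ioo (0:ℝ) 1)
    (Cx : (Fin (d - l) → ℝ) → ℝ)
    (hCx : ∀ y : Fin (d - l) → ℝ, (∀ j, y j ∈ Icc (0:ℝ) 1) →
      archKR ψ φ x y = Cx (fun j => gxF ψ φ x (y j))) :
    (∀ z : ℝ, 0 ≤ z → psiX ψ φ x z = gxF ψ φ x (ψ z)) ∧
    ContinuousOn (psiX ψ φ x) (Ici 0) ∧
    StrictAntiOn (psiX ψ φ x) (Ici 0) ∧
    psiX ψ φ x 0 = 1 ∧
    Tendsto (psiX ψ φ x) atTop (nhds 0) ∧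
    (∀ z : ℝ, 0 < z →
      0 ≤ (-1:ℝ) ^ (d - l - 2) * iteratedDeriv (d - l - 2) (psiX ψ φ x) z) ∧
    AntitoneOn (fun z => (-1:ℝ) ^ (d - l - 2) * iteratedDeriv (d - l - 2) (psiX ψ φ x) z)
      (Ioi 0) ∧
    ConvexOn ℝ (Ioi 0)
      (fun z => (-1:ℝ) ^ (d - l - 2) * iteratedDeriv (d - l - 2) (psiX ψ φ x) z) ∧
    (∀ u : Fin (d - l) → ℝ, (∀ j, u j ∈ Ioc (0:ℝ) 1) →
      Cx u = psiX ψ φ x (∑ j, pseudoInv (psiX ψ φ x) (u j))) := by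
  obtain ⟨hg, hpos, hphi⟩ := hgen
  have hgen' : IsStrictGenerator d ψ φ := ⟨hg, hpos, hphi⟩
  set S := ∑ i, φ (x i) with hSdef
  -- basic positivity facts
  have hphix : ∀ i, 0 < φ (x i) := by
    intro i
    have hx0 := (hx i).1
    have hx1 := (hx i).2
    have hnn : 0 ≤ φ (x i) := hg.xi_nonneg (x i) hx0 hx1.le
    rcases lt_or_eq_of_le hnn with h | h
    · exact h
    · exfalso
      have := hg.eta_xi (x i) hx0 hx1.le
      rw [← h, hg.at_zero] at this
      linarith
  have hSpos : 0 < S := by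
    have : Nonempty (Fin l) := ⟨⟨0, by omega⟩⟩
    exact Finset.sum_pos (fun i _ => hphix i) Finset.univ_nonempty
  have hDpos : 0 < (-1:ℝ) ^ l * iteratedDeriv l ψ S := aux_pos hgen' hl1 hl2 hSpos
  have hDne : iteratedDeriv l ψ S ≠ 0 := by
    intro h
    rw [h, mul_zero] at hDpos
    exact lt_irrefl _ hDpos
  have hne1 : ((-1:ℝ) ^ l) ≠ 0 := pow_ne_zero _ (by norm_num)
  have hpsival : ∀ z : ℝ, psiX ψ φ x z = iteratedDeriv l ψ (S + z) / iteratedDeriv l ψ S :=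
    fun z => rfl
  have hpsih : ∀ z : ℝ, psiX ψ φ x z
      = ((-1:ℝ) ^ l * iteratedDeriv l ψ (S + z)) / ((-1:ℝ) ^ l * iteratedDeriv l ψ S) :=
    fun z => (mul_div_mul_left _ _ hne1).symm
  -- (1) psiX = gxF ∘ ψ
  have hc1 : ∀ z : ℝ, 0 ≤ z → psiX ψ φ x z = gxF ψ φ x (ψ z) := by
    intro z hz
    have hψz : 0 < ψ z := hpos z hz
    simp only [psiX, gxF, if_neg (not_le.2 hψz), hphi z hz, hSdef]
  -- (2) continuity
  have hc2 : ContinuousOn (psiX ψ φ x) (Ici 0) := by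
    have hcomp : ContinuousOn (fun z : ℝ => iteratedDeriv l ψ (S + z)) (Ici 0) :=
      (aux_cont hgen' hl2).comp (continuous_const.add continuous_id).continuousOn
        (fun z hz => mem_Ioi.2 (by have := mem_Ici.1 hz; linarith))
    exact hcomp.div_const _
  -- (3) strict antitonicity
  have hc3 : StrictAntiOn (psiX ψ φ x) (Ici 0) := by
    intro z1 h1 z2 h2 hlt
    have h1' := mem_Ici.1 h1
    have h2' := mem_Ici.1 h2
    have hS1 : 0 < S + z1 := by linarith
    have hS2 : 0 < S + z2 := by linarith
    rw [hpsih z1, hpsih z2, div_lt_div_iff₀ hDpos hDpos]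
    have hkey : (-1:ℝ) ^ l * iteratedDeriv l ψ (S + z2)
        < (-1:ℝ) ^ l * iteratedDeriv l ψ (S + z1) := by
      have hle : (-1:ℝ) ^ l * iteratedDeriv l ψ (S + z2)
          ≤ (-1:ℝ) ^ l * iteratedDeriv l ψ (S + z1) :=
        aux_anti hgen' hl2 (mem_Ioi.2 hS1) (mem_Ioi.2 hS2) (by linarith)
      rcases lt_or_eq_of_le hle with h | h
      · exact h
      · exfalso
        have hflat := aux_flat (aux_convex hgen' hl2) (aux_anti hgen' hl2) hS1
          (show S + z1 < S + z2 by linarith) h.symm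
        have hvpos : 0 < (-1:ℝ) ^ l * iteratedDeriv l ψ (S + z1) :=
          aux_pos hgen' hl1 hl2 hS1
        exact aux_lb hgen' hl1 hl2 hvpos hS1 (fun z hz => le_of_eq (hflat z hz).symm)
    exact mul_lt_mul_of_pos_right hkey hDpos
  -- (4) value at 0
  have hc4 : psiX ψ φ x 0 = 1 := by
    rw [hpsival 0, add_zero, div_self hDne]
  -- (5) limit at infinity
  have hc5 : Tendsto (psiX ψ φ x) atTop (nhds 0) := by
    rw [Metric.tendsto_atTop]
    intro ε hε
    have hεD : 0 < ε * ((-1:ℝ) ^ l * iteratedDeriv l ψ S) := mul_pos hε hDpos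
    have hno : ¬ ∀ z : ℝ, (1:ℝ) ≤ z →
        ε * ((-1:ℝ) ^ l * iteratedDeriv l ψ S) ≤ (-1:ℝ) ^ l * iteratedDeriv l ψ z :=
      fun hcon => aux_lb hgen' hl1 hl2 hεD one_pos hcon
    push_neg at hno
    obtain ⟨z₀, hz₀1, hz₀⟩ := hno
    have hz0pos : (0:ℝ) < z₀ := lt_of_lt_of_le one_pos hz₀1
    refine ⟨z₀, fun z hz => ?_⟩
    have hSz : 0 < S + z := by linarith
    have hle : (-1:ℝ) ^ l * iteratedDeriv l ψ (S + z)
        ≤ (-1:ℝ) ^ l * iteratedDeriv l ψ z₀ :=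
      aux_anti hgen' hl2 (mem_Ioi.2 hz0pos) (mem_Ioi.2 hSz) (by linarith)
    have hnn : 0 ≤ (-1:ℝ) ^ l * iteratedDeriv l ψ (S + z) := hg.alt_sign l hl2 _ hSz
    rw [Real.dist_eq, sub_zero, abs_of_nonneg (by rw [hpsih z]; positivity)]
    rw [hpsih z, div_lt_iff₀ hDpos]
    linarith
  -- iterated derivative formula for psiX
  have hiter : ∀ n : ℕ, n ≤ d - 2 - l → ∀ z : ℝ, 0 < z →
      iteratedDeriv n (psiX ψ φ x) z
        = iteratedDeriv (l + n) ψ (S + z) / iteratedDeriv l ψ S := by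
    intro n
    induction n with
    | zero =>
      intro _ z _
      simp only [iteratedDeriv_zero, Nat.add_zero]
      exact hpsival z
    | succ n ihn =>
      intro hn z hz
      have hn' : n ≤ d - 2 - l := by omega
      rw [iteratedDeriv_succ]
      have hev : iteratedDeriv n (psiX ψ φ x)
          =ᶠ[nhds z] fun w => iteratedDeriv (l + n) ψ (S + w) / iteratedDeriv l ψ S :=
        Filter.eventuallyEq_of_mem (isOpen_Ioi.mem_nhds hz) (fun w hw => ihn hn' w hw)
      rw [hev.deriv_eq]
      have houter := aux_hasDerivAt hgen' (show l + n + 1 ≤ d - 2 by omega)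
        (show 0 < S + z by linarith)
      have hinner : HasDerivAt (fun w : ℝ => S + w) 1 z := by
        simpa using (hasDerivAt_id z).const_add S
      have hda : HasDerivAt (fun w => iteratedDeriv (l + n) ψ (S + w))
          (iteratedDeriv (l + n + 1) ψ (S + z)) z := by
        have := HasDerivAt.comp z houter hinner
        rwa [mul_one] at this
      rw [(hda.div_const (iteratedDeriv l ψ S)).deriv]
      rfl
  have hkeyid : ∀ w : ℝ,
      (-1:ℝ) ^ (d - l - 2) * (iteratedDeriv (d - 2) ψ w / iteratedDeriv l ψ S)
        = ((-1:ℝ) ^ (d - 2) * iteratedDeriv (d - 2) ψ w)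
          / ((-1:ℝ) ^ l * iteratedDeriv l ψ S) := by
    intro w
    rw [show ((-1:ℝ)) ^ (d - 2) = (-1:ℝ) ^ l * (-1:ℝ) ^ (d - l - 2) by
      rw [← pow_add]; congr 1; omega]
    rw [mul_assoc, mul_div_mul_left _ _ hne1, mul_div_assoc]
  have htop : ∀ z : ℝ, 0 < z →
      (-1:ℝ) ^ (d - l - 2) * iteratedDeriv (d - l - 2) (psiX ψ φ x) z
        = ((-1:ℝ) ^ (d - 2) * iteratedDeriv (d - 2) ψ (S + z))
          / ((-1:ℝ) ^ l * iteratedDeriv l ψ S) := by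
    intro z hz
    have hval := hiter (d - l - 2) (by omega) z hz
    rw [show l + (d - l - 2) = d - 2 from by omega] at hval
    rw [hval, hkeyid]
  -- (6) sign of top derivative
  have hc6 : ∀ z : ℝ, 0 < z →
      0 ≤ (-1:ℝ) ^ (d - l - 2) * iteratedDeriv (d - l - 2) (psiX ψ φ x) z := by
    intro z hz
    rw [htop z hz]
    exact div_nonneg (hg.alt_sign (d - 2) le_rfl _ (by linarith)) hDpos.le
  -- (7) antitonicity of top derivative
  have hc7 : AntitoneOn
      (fun z => (-1:ℝ) ^ (d - l - 2) * iteratedDeriv (d - l - 2) (psiX ψ φ x) z) (Ioi 0) := by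
    intro z1 h1 z2 h2 hle
    have h1' := mem_Ioi.1 h1
    have h2' := mem_Ioi.1 h2
    show (-1:ℝ) ^ (d - l - 2) * iteratedDeriv (d - l - 2) (psiX ψ φ x) z2
      ≤ (-1:ℝ) ^ (d - l - 2) * iteratedDeriv (d - l - 2) (psiX ψ φ x) z1
    rw [htop z1 h1', htop z2 h2']
    have hmono : (-1:ℝ) ^ (d - 2) * iteratedDeriv (d - 2) ψ (S + z2)
        ≤ (-1:ℝ) ^ (d - 2) * iteratedDeriv (d - 2) ψ (S + z1) :=
      aux_anti hgen' le_rfl (mem_Ioi.2 (by linarith)) (mem_Ioi.2 (by linarith)) (by linarith)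
    exact (div_le_div_iff_of_pos_right hDpos).2 hmono
  -- (8) convexity of top derivative
  have hc8 : ConvexOn ℝ (Ioi 0)
      (fun z => (-1:ℝ) ^ (d - l - 2) * iteratedDeriv (d - l - 2) (psiX ψ φ x) z) := by
    refine ⟨convex_Ioi 0, ?_⟩
    intro p hp q hq a b ha hb hab
    have hp' := mem_Ioi.1 hp
    have hq' := mem_Ioi.1 hq
    have hcomb : 0 < a * p + b * q := by
      nlinarith [mul_nonneg ha (sub_nonneg.2 (min_le_left p q)),
        mul_nonneg hb (sub_nonneg.2 (min_le_right p q)), lt_min hp' hq']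
    simp only [smul_eq_mul]
    rw [htop _ hcomb, htop p hp', htop q hq']
    have hcv := (aux_convex hgen' (le_refl (d - 2))).2 (mem_Ioi.2 (show (0:ℝ) < S + p by linarith))
      (mem_Ioi.2 (show (0:ℝ) < S + q by linarith)) ha hb hab
    simp only [smul_eq_mul] at hcv
    have heq2 : a * (S + p) + b * (S + q) = S + (a * p + b * q) := by
      linear_combination S * hab
    rw [heq2] at hcv
    rw [← mul_div_assoc, ← mul_div_assoc, ← add_div]
    exact (div_le_div_iff_of_pos_right hDpos).2 hcv
  -- (9) conditional copula formula
  have hc9 : ∀ u : Fin (d - l) → ℝ, (∀ j, u j ∈ Ioc (0:ℝ) 1) →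
      Cx u = psiX ψ φ x (∑ j, pseudoInv (psiX ψ φ x) (u j)) := by
    have hinv : ∀ t : ℝ, 0 < t → t ≤ 1 →
        0 ≤ pseudoInv (psiX ψ φ x) t ∧ psiX ψ φ x (pseudoInv (psiX ψ φ x) t) = t := by
      intro t ht ht1
      obtain ⟨z₀, hz₀0, hz₀⟩ : ∃ z₀, 0 ≤ z₀ ∧ psiX ψ φ x z₀ = t := by
        obtain ⟨Z, hZ0, hZ⟩ : ∃ Z, 0 ≤ Z ∧ psiX ψ φ x Z < t := by
          obtain ⟨Z, h1, h2⟩ := ((hc5.eventually_lt_const ht).and (eventually_ge_atTop 0)).exists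
          exact ⟨Z, h2, h1⟩
        have hsub : Icc (psiX ψ φ x Z) (psiX ψ φ x 0) ⊆ psiX ψ φ x '' Icc 0 Z :=
          intermediate_value_Icc' hZ0 (hc2.mono Icc_subset_Ici_self)
        obtain ⟨z₀, hz₀, hz₀e⟩ := hsub ⟨hZ.le, by rw [hc4]; exact ht1⟩
        exact ⟨z₀, hz₀.1, hz₀e⟩
      have hAclosed : IsClosed {z : ℝ | 0 ≤ z ∧ psiX ψ φ x z ≤ t} := by
        have hAeq : {z : ℝ | 0 ≤ z ∧ psiX ψ φ x z ≤ t} = Ici 0 ∩ psiX ψ φ x ⁻¹' Iic t := by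
          ext z; simp [mem_Ici, mem_Iic]
        rw [hAeq]
        exact hc2.preimage_isClosed_of_isClosed isClosed_Ici isClosed_Iic
      have hAne : {z : ℝ | 0 ≤ z ∧ psiX ψ φ x z ≤ t}.Nonempty := ⟨z₀, hz₀0, hz₀.le⟩
      have hAbdd : BddBelow {z : ℝ | 0 ≤ z ∧ psiX ψ φ x z ≤ t} := ⟨0, fun z hz => hz.1⟩
      have hmemA := hAclosed.csInf_mem hAne hAbdd
      have hge : 0 ≤ pseudoInv (psiX ψ φ x) t := hmemA.1
      have hle2 : pseudoInv (psiX ψ φ x) t ≤ z₀ := csInf_le hAbdd ⟨hz₀0, hz₀.le⟩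
      have hA1 : psiX ψ φ x (pseudoInv (psiX ψ φ x) t) ≤ t := hmemA.2
      have hA2 : t ≤ psiX ψ φ x (pseudoInv (psiX ψ φ x) t) := by
        have := hc3.antitoneOn (mem_Ici.2 hge) (mem_Ici.2 hz₀0) hle2
        rw [hz₀] at this
        exact this
      exact ⟨hge, le_antisymm hA1 hA2⟩
    intro u hu
    have hj : ∀ j, 0 ≤ pseudoInv (psiX ψ φ x) (u j)
        ∧ psiX ψ φ x (pseudoInv (psiX ψ φ x) (u j)) = u j :=
      fun j => hinv (u j) (hu j).1 (hu j).2
    have hypos : ∀ j, 0 < ψ (pseudoInv (psiX ψ φ x) (u j)) := fun j => hpos _ (hj j).1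
    have hyIcc : ∀ j, ψ (pseudoInv (psiX ψ φ x) (u j)) ∈ Icc (0:ℝ) 1 := by
      intro j
      refine ⟨(hypos j).le, ?_⟩
      have := hg.antitoneOn (mem_Ici.2 le_rfl) (mem_Ici.2 (hj j).1) (hj j).1
      rw [hg.at_zero] at this
      exact this
    have hKC := hCx (fun j => ψ (pseudoInv (psiX ψ φ x) (u j))) hyIcc
    have hgy : ∀ j, gxF ψ φ x (ψ (pseudoInv (psiX ψ φ x) (u j))) = u j := by
      intro j
      rw [← hc1 _ (hj j).1]
      exact (hj j).2
    have hyu : (fun j => gxF ψ φ x (ψ (pseudoInv (psiX ψ φ x) (u j)))) = u := funext hgy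
    rw [hyu] at hKC
    rw [← hKC]
    simp only [archKR]
    rw [if_neg (by push_neg; exact fun j => hypos j)]
    have hsum : (∑ j, φ (ψ (pseudoInv (psiX ψ φ x) (u j))))
        = ∑ j, pseudoInv (psiX ψ φ x) (u j) :=
      Finset.sum_congr rfl (fun j _ => hphi _ (hj j).1)
    rw [hsum]
    exact (hpsival _).symm
  exact ⟨hc1, hc2, hc3, hc4, hc5, hc6, hc7, hc8, hc9⟩
end
end

section
/- Let C be a strict d-dimensional Archimedean copula with generator ψ, ℓ ∈ {1,…,d−2}, and for x ∈ (0,1)^ℓ let ψˣ(z) = ψ^{(ℓ)}(Σ_{i=1}^ℓ φ(x_i)+z)/ψ^{(ℓ)}(Σ_{i=1}^ℓ φ(x_i)) denote the generator of the conditional copula Cˣ. Then for every z ∈ [0,∞): ψ(z) = ∫_{[0,1]^ℓ} ψˣ(z) dμ_{C^{1:ℓ}}(x). -/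
open MeasureTheory ProbabilityTheory Set Filter Topology
open scoped ENNReal

noncomputable section
attribute [local instance] Classical.propDecidable

section AuxDisint

def negD (ψ : ℝ → ℝ) (m : ℕ) (z : ℝ) : ℝ := (-1)^m * iteratedDeriv m ψ z

lemma measurable_iteratedDeriv_succ (ψ : ℝ → ℝ) (m : ℕ) :
    Measurable (iteratedDeriv (m+1) ψ) := by
  rw [iteratedDeriv_succ]; exact measurable_deriv _

lemma measurable_negD_succ (ψ : ℝ → ℝ) (m : ℕ) : Measurable (negD ψ (m+1)) :=
  (measurable_iteratedDeriv_succ ψ m).const_mul _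

-- iteratedDeriv facts on the open set Ioi 0 from ContDiffAt
lemma contOn_iteratedDeriv {n : ℕ} {ψ : ℝ → ℝ}
    (hs : ∀ z : ℝ, 0 < z → ContDiffAt ℝ (n : ℕ∞) ψ z) {m : ℕ} (hm : m ≤ n) :
    ContinuousOn (iteratedDeriv m ψ) (Ioi 0) := by
  have hco : ContDiffOn ℝ (n : ℕ∞) ψ (Ioi 0) := fun z hz => (hs z hz).contDiffWithinAt
  have h := hco.continuousOn_iteratedDerivWithin (m := m) (by exact_mod_cast hm)
      (uniqueDiffOn_Ioi 0)
  refine h.congr fun z hz => ?_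
  rw [iteratedDerivWithin_eq_iteratedFDerivWithin, iteratedDeriv_eq_iteratedFDeriv,
    iteratedFDerivWithin_of_isOpen m isOpen_Ioi hz]

lemma hasDerivAt_iteratedDeriv {n : ℕ} {ψ : ℝ → ℝ}
    (hs : ∀ z : ℝ, 0 < z → ContDiffAt ℝ (n : ℕ∞) ψ z) {m : ℕ} (hm : m < n)
    {z : ℝ} (hz : 0 < z) :
    HasDerivAt (iteratedDeriv m ψ) (iteratedDeriv (m+1) ψ z) z := by
  have hco : ContDiffOn ℝ (n : ℕ∞) ψ (Ioi 0) := fun z hz => (hs z hz).contDiffWithinAt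
  have h := hco.differentiableOn_iteratedDerivWithin (m := m) (by exact_mod_cast hm)
      (uniqueDiffOn_Ioi 0)
  have heq : EqOn (iteratedDerivWithin m ψ (Ioi 0)) (iteratedDeriv m ψ) (Ioi 0) := by
    intro y hy
    rw [iteratedDerivWithin_eq_iteratedFDerivWithin, iteratedDeriv_eq_iteratedFDeriv,
      iteratedFDerivWithin_of_isOpen m isOpen_Ioi hy]
  have hd : DifferentiableAt ℝ (iteratedDeriv m ψ) z := by
    have h2 := (h z hz).congr (fun x hx => (heq hx).symm) (heq hz).symm
    exact h2.differentiableAt (Ioi_mem_nhds hz)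
  have h3 := hd.hasDerivAt
  rwa [iteratedDeriv_succ]

lemma antiOn_negD {n : ℕ} {ψ : ℝ → ℝ}
    (hs : ∀ z : ℝ, 0 < z → ContDiffAt ℝ (n : ℕ∞) ψ z)
    (halt : ∀ m : ℕ, m ≤ n → ∀ z : ℝ, 0 < z → 0 ≤ negD ψ m z)
    (htop : AntitoneOn (negD ψ n) (Ioi 0)) {m : ℕ} (hm : m ≤ n) :
    AntitoneOn (negD ψ m) (Ioi 0) := by
  rcases eq_or_lt_of_le hm with rfl | hlt
  · exact htop
  · have hcont : ContinuousOn (negD ψ m) (Ioi 0) :=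
      continuousOn_const.mul (contOn_iteratedDeriv hs hm)
    have hderiv : ∀ z ∈ Ioi (0:ℝ), HasDerivAt (negD ψ m) (-(negD ψ (m+1) z)) z := by
      intro z hz
      have h : HasDerivAt (negD ψ m) ((-1:ℝ)^m * iteratedDeriv (m+1) ψ z) z :=
        (hasDerivAt_iteratedDeriv hs hlt hz).const_mul ((-1:ℝ)^m)
      convert h using 1
      simp only [negD, pow_succ]; ring
    have hdiff : DifferentiableOn ℝ (negD ψ m) (interior (Ioi 0)) := by
      rw [interior_Ioi]
      exact fun z hz => (hderiv z hz).differentiableAt.differentiableWithinAt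
    refine antitoneOn_of_deriv_nonpos (convex_Ioi 0) hcont hdiff ?_
    intro z hz
    rw [interior_Ioi] at hz
    rw [(hderiv z hz).deriv]
    simpa using halt (m+1) hlt z hz

lemma tendsto_negD {n : ℕ} {ψ : ℝ → ℝ}
    (hs : ∀ z : ℝ, 0 < z → ContDiffAt ℝ (n : ℕ∞) ψ z)
    (halt : ∀ m : ℕ, m ≤ n → ∀ z : ℝ, 0 < z → 0 ≤ negD ψ m z)
    (htop : AntitoneOn (negD ψ n) (Ioi 0))
    (h0 : Tendsto ψ atTop (𝓝 0)) :
    ∀ m : ℕ, m ≤ n → Tendsto (negD ψ m) atTop (𝓝 0) := by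
  intro m
  induction m with
  | zero =>
    intro _
    have : negD ψ 0 = ψ := by funext z; simp [negD]
    rwa [this]
  | succ k ih =>
    intro hk1
    have hk : k ≤ n := le_of_lt (Nat.lt_of_succ_le hk1)
    have hklt : k < n := Nat.lt_of_succ_le hk1
    have IH := ih hk
    have hanti : AntitoneOn (negD ψ (k+1)) (Ioi 0) := antiOn_negD hs halt htop hk1
    have hnn : ∀ z : ℝ, 0 < z → 0 ≤ negD ψ (k+1) z := halt (k+1) hk1
    -- key : ∀ ε > 0, ∃ x > 0, negD ψ (k+1) x < ε
    have key : ∀ ε : ℝ, 0 < ε → ∃ x : ℝ, 0 < x ∧ negD ψ (k+1) x < ε := by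
      intro ε hε
      by_contra hcon
      push_neg at hcon
      -- then negD ψ (k+1) ≥ ε everywhere on (0,∞)
      have hge : ∀ x : ℝ, 0 < x → ε ≤ negD ψ (k+1) x := fun x hx => hcon x hx
      -- choose b large with |negD ψ k b| ≤ 1 and ε * (b - 1) > |negD ψ k 1| + 1
      have hb1 : ∀ᶠ b in atTop, |negD ψ k b| ≤ 1 := by
        have := IH.eventually (eventually_le_nhds (by norm_num : (0:ℝ) < 1))
        have h2 := IH.eventually (eventually_ge_nhds (by norm_num : (-1:ℝ) < 0))
        filter_upwards [this, h2] with b hb hb2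
        rw [abs_le]; exact ⟨hb2, hb⟩
      have hb2 : ∀ᶠ b : ℝ in atTop, |negD ψ k 1| + 1 < ε * (b - 1) := by
        have : Tendsto (fun b : ℝ => ε * (b - 1)) atTop atTop :=
          (tendsto_atTop_add_const_right atTop (-1) tendsto_id).const_mul_atTop hε
        exact this.eventually_gt_atTop _
      obtain ⟨b, hb, hib, hgt⟩ :
          ∃ b : ℝ, 1 < b ∧ |negD ψ k b| ≤ 1 ∧ |negD ψ k 1| + 1 < ε * (b - 1) := by
        rcases ((eventually_gt_atTop 1).and (hb1.and hb2)).exists with ⟨b, h1, h2, h3⟩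
        exact ⟨b, h1, h2, h3⟩
      -- MVT on iteratedDeriv k ψ over [1, b]
      obtain ⟨c, hc, hceq⟩ := exists_hasDerivAt_eq_slope (iteratedDeriv k ψ)
        (fun x => iteratedDeriv (k+1) ψ x) hb
        ((contOn_iteratedDeriv hs hk).mono (fun x hx => lt_of_lt_of_le one_pos hx.1))
        (fun x hx => hasDerivAt_iteratedDeriv hs hklt (lt_trans one_pos hx.1))
      have hcpos : (0:ℝ) < c := lt_trans one_pos hc.1
      have habs : ε ≤ |iteratedDeriv (k+1) ψ c| := by
        have := hge c hcpos
        have heq : |iteratedDeriv (k+1) ψ c| = negD ψ (k+1) c := by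
          rw [← abs_of_nonneg (hge c hcpos |>.trans (le_refl _) |> fun _ => hnn c hcpos)]
          · simp [negD, abs_mul, abs_pow]
        rw [heq]; exact this
      have hslope : |iteratedDeriv k ψ b - iteratedDeriv k ψ 1| = |negD ψ k b - negD ψ k 1| := by
        have : negD ψ k b - negD ψ k 1 = (-1)^k * (iteratedDeriv k ψ b - iteratedDeriv k ψ 1) := by
          simp [negD]; ring
        rw [this, abs_mul, abs_pow, abs_neg, abs_one, one_pow, one_mul]
      have hbig : ε * (b - 1) ≤ |negD ψ k b - negD ψ k 1| := by
        rw [← hslope]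
        have hb0 : (0:ℝ) < b - 1 := by linarith
        have := hceq
        have h4 : iteratedDeriv (k+1) ψ c * (b - 1)
            = iteratedDeriv k ψ b - iteratedDeriv k ψ 1 := by
          field_simp at this ⊢
          linarith [this]
        calc ε * (b - 1) ≤ |iteratedDeriv (k+1) ψ c| * (b - 1) := by
              apply mul_le_mul_of_nonneg_right habs (le_of_lt hb0)
          _ = |iteratedDeriv (k+1) ψ c * (b - 1)| := by
              rw [abs_mul, abs_of_pos hb0]
          _ = _ := by rw [h4]
      have : |negD ψ k b - negD ψ k 1| ≤ |negD ψ k b| + |negD ψ k 1| := abs_sub _ _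
      linarith [abs_nonneg (negD ψ k 1)]
    -- conclude the limit
    rw [tendsto_order]
    constructor
    · intro a ha
      filter_upwards [eventually_gt_atTop (0:ℝ)] with x hx
      exact lt_of_lt_of_le ha (hnn x hx)
    · intro a ha
      obtain ⟨x, hx, hfx⟩ := key a ha
      filter_upwards [eventually_gt_atTop x] with y hy
      exact lt_of_le_of_lt (hanti hx (lt_trans hx hy) (le_of_lt hy)) hfx

structure Setup (n : ℕ) (ψ : ℝ → ℝ) : Prop where
  psizero : ψ 0 = 1
  psipos : ∀ z : ℝ, 0 ≤ z → 0 < ψ z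
  psicontIci : ContinuousOn ψ (Ici 0)
  psianti : AntitoneOn ψ (Ici 0)
  cont : ∀ m, m ≤ n → ContinuousOn (iteratedDeriv m ψ) (Ioi 0)
  hasD : ∀ m, m < n → ∀ z : ℝ, 0 < z →
    HasDerivAt (iteratedDeriv m ψ) (iteratedDeriv (m+1) ψ z) z
  nonneg : ∀ m, m ≤ n → ∀ z : ℝ, 0 < z → 0 ≤ negD ψ m z
  anti : ∀ m, m ≤ n → AntitoneOn (negD ψ m) (Ioi 0)
  lim : ∀ m, m ≤ n → Tendsto (negD ψ m) atTop (𝓝 0)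

lemma Setup.of_gen {d : ℕ} {ψ φ : ℝ → ℝ} (hg : IsStrictGenerator d ψ φ) :
    Setup (d-2) ψ := by
  obtain ⟨hr, hpos, hinv⟩ := hg
  have hs : ∀ z : ℝ, 0 < z → ContDiffAt ℝ ((d-2 : ℕ) : ℕ∞) ψ z := hr.smooth
  have halt : ∀ m : ℕ, m ≤ d-2 → ∀ z : ℝ, 0 < z → 0 ≤ negD ψ m z := hr.alt_sign
  have htop : AntitoneOn (negD ψ (d-2)) (Ioi 0) := hr.top_antitone
  exact ⟨hr.at_zero, hpos, hr.continuousOn, hr.antitoneOn,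
    fun m hm => contOn_iteratedDeriv hs hm,
    fun m hm z hz => hasDerivAt_iteratedDeriv hs hm hz,
    halt, fun m hm => antiOn_negD hs halt htop hm,
    tendsto_negD hs halt htop hr.tendsto_zero⟩

lemma negD_strictanti_zero {n : ℕ} {ψ : ℝ → ℝ} (S : Setup n ψ) {m : ℕ} (hm : m ≤ n)
    {z z' : ℝ} (hz : 0 < z) (hzz : z ≤ z') (h0 : negD ψ m z = 0) : negD ψ m z' = 0 :=
  le_antisymm (h0 ▸ S.anti m hm hz (lt_of_lt_of_le hz hzz) hzz)
    (S.nonneg m hm z' (lt_of_lt_of_le hz hzz))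

/-- improper FTC step -/
lemma step_lintegral {n : ℕ} {ψ : ℝ → ℝ} (S : Setup n ψ) {k : ℕ} (hk : k + 1 ≤ n)
    {a c : ℝ} (ha : 0 ≤ a) (hc : 0 ≤ c) (hac : 0 < a + c) :
    ∫⁻ u in Ioi a, ENNReal.ofReal (negD ψ (k+1) (u + c)) =
      ENNReal.ofReal (negD ψ k (a + c)) := by
  set g : ℝ → ℝ := fun u => -(negD ψ k (u + c)) with hg
  set g' : ℝ → ℝ := fun u => negD ψ (k+1) (u + c) with hg'
  have hkn : k ≤ n := le_of_lt hk
  have hargpos : ∀ u : ℝ, u ∈ Ioi a → 0 < u + c := fun u hu => by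
    have : a < u := hu; linarith
  have hderiv : ∀ u ∈ Ioi a, HasDerivAt g (g' u) u := by
    intro u hu
    have h1 : HasDerivAt (iteratedDeriv k ψ) (iteratedDeriv (k+1) ψ (u + c)) (u + c) :=
      S.hasD k hk (u + c) (hargpos u hu)
    have h2 : HasDerivAt g (-((-1:ℝ)^k * iteratedDeriv (k+1) ψ (u + c))) u :=
      ((h1.comp_add_const u c).const_mul ((-1:ℝ)^k)).neg
    convert h2 using 1
    simp only [negD, g', pow_succ]; ring
  have hcont : ContinuousWithinAt g (Ici a) a := by
    have h1 : ContinuousAt (iteratedDeriv k ψ) (a + c) :=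
      (S.cont k hkn).continuousAt (Ioi_mem_nhds hac)
    have h2 : ContinuousAt g a := by
      have h3 : ContinuousAt (fun u : ℝ => u + c) a := by fun_prop
      have h4 : ContinuousAt (fun u : ℝ => iteratedDeriv k ψ (u + c)) a :=
        ContinuousAt.comp (x := a) (f := fun u : ℝ => u + c) h1 h3
      exact ((h4.const_mul ((-1:ℝ)^k)).neg)
    exact h2.continuousWithinAt
  have hpos : ∀ u ∈ Ioi a, 0 ≤ g' u := fun u hu =>
    S.nonneg (k+1) hk (u + c) (hargpos u hu)
  have htend : Tendsto g atTop (𝓝 0) := by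
    have h1 : Tendsto (fun u : ℝ => u + c) atTop atTop :=
      tendsto_atTop_add_const_right atTop c tendsto_id
    have := ((S.lim k hkn).comp h1).neg
    simpa using this
  have hint : IntegrableOn g' (Ioi a) :=
    integrableOn_Ioi_deriv_of_nonneg hcont hderiv hpos htend
  have heq : ∫ u in Ioi a, g' u = 0 - g a :=
    integral_Ioi_of_hasDerivAt_of_nonneg hcont hderiv hpos htend
  have hae : 0 ≤ᵐ[volume.restrict (Ioi a)] g' := by
    filter_upwards [ae_restrict_mem measurableSet_Ioi] with u hu using hpos u hu
  have := ofReal_integral_eq_lintegral_ofReal hint hae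
  rw [← this, heq]
  simp [g]

lemma keyK {n : ℕ} {ψ : ℝ → ℝ} (S : Setup n ψ) (L : ℕ) (hL : L ≤ n) (hL1 : 1 ≤ L) :
    ∀ m : ℕ, m ≤ L → ∀ a : Fin m → ℝ, (∀ i, 0 ≤ a i) → ∀ c : ℝ, 0 ≤ c →
      0 < (∑ i, a i) + c →
    ∫⁻ t in univ.pi (fun i => Ioi (a i)),
        ENNReal.ofReal (negD ψ L ((∑ i, t i) + c)) =
      ENNReal.ofReal (negD ψ (L - m) ((∑ i, a i) + c)) := by
  have hmeasL : Measurable (negD ψ L) := by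
    obtain ⟨L', rfl⟩ : ∃ L', L = L' + 1 := ⟨L - 1, by omega⟩
    exact measurable_negD_succ ψ L'
  intro m
  induction m with
  | zero =>
    intro _ a _ c _ _
    have h1 : (univ.pi fun i : Fin 0 => Ioi (a i)) = univ := by
      ext t; simp
    rw [h1, Measure.restrict_univ]
    have h2 : (volume : Measure (Fin 0 → ℝ)) = Measure.dirac (fun i => i.elim0) := by
      rw [volume_pi]; exact Measure.pi_of_empty _ _
    rw [h2]
    rw [lintegral_dirac' _ (by
      apply Measurable.ennreal_ofReal
      exact hmeasL.comp ((Finset.measurable_sum _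
        (fun i _ => measurable_pi_apply i)).add_const c))]
    simp
  | succ m ih =>
    intro hm1 a ha c hc hpos
    have hm : m ≤ L := by omega
    set s0 : Set ℝ := Ioi (a 0) with hs0
    set s1 : Set (Fin m → ℝ) := univ.pi (fun j => Ioi (a j.succ)) with hs1
    have hs1m : MeasurableSet s1 := MeasurableSet.univ_pi (fun j => measurableSet_Ioi)
    set A : Set (Fin (m+1) → ℝ) := univ.pi (fun i => Ioi (a i)) with hA
    have hAm : MeasurableSet A := MeasurableSet.univ_pi (fun i => measurableSet_Ioi)
    set g : (Fin (m+1) → ℝ) → ℝ≥0∞ :=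
      fun t => ENNReal.ofReal (negD ψ L ((∑ i, t i) + c)) with hgdef
    have hgmeas : Measurable g := by
      apply Measurable.ennreal_ofReal
      exact hmeasL.comp ((Finset.measurable_sum _
        (fun i _ => measurable_pi_apply i)).add_const c)
    set e := MeasurableEquiv.piFinSuccAbove (fun _ : Fin (m+1) => ℝ) 0 with he
    have mp : MeasurePreserving e (Measure.pi fun _ => volume)
        ((volume : Measure ℝ).prod (Measure.pi fun _ : Fin m => volume)) :=
      measurePreserving_piFinSuccAbove (fun _ : Fin (m+1) => (volume : Measure ℝ)) 0
    set F : ℝ × (Fin m → ℝ) → ℝ≥0∞ := fun p => A.indicator g (e.symm p) with hFdef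
    -- coordinates of e.symm
    have hcoord0 : ∀ (u : ℝ) (v : Fin m → ℝ), (e.symm (u, v)) 0 = u := by
      intro u v
      simp [he, MeasurableEquiv.piFinSuccAbove_symm_apply, Fin.insertNth_apply_same]
    have hcoords : ∀ (u : ℝ) (v : Fin m → ℝ) (j : Fin m), (e.symm (u, v)) j.succ = v j := by
      intro u v j
      have := @Fin.insertNth_apply_succAbove m (fun _ => ℝ) 0 u v j
      simpa [he, MeasurableEquiv.piFinSuccAbove_symm_apply, Fin.zero_succAbove] using this
    have hmem : ∀ (u : ℝ) (v : Fin m → ℝ), e.symm (u, v) ∈ A ↔ u ∈ s0 ∧ v ∈ s1 := by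
      intro u v
      constructor
      · intro h
        refine ⟨?_, ?_⟩
        · have := h 0 (mem_univ _); rwa [hcoord0] at this
        · intro j _
          have := h j.succ (mem_univ _); rwa [hcoords] at this
      · rintro ⟨h1, h2⟩ i _
        rcases Fin.eq_zero_or_eq_succ i with rfl | ⟨j, rfl⟩
        · rwa [hcoord0]
        · rw [hcoords]; exact h2 j (mem_univ _)
    have hsum : ∀ (u : ℝ) (v : Fin m → ℝ), (∑ i, (e.symm (u, v)) i) = u + ∑ j : Fin m, v j := by
      intro u v
      rw [Fin.sum_univ_succ, hcoord0]
      simp only [hcoords]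
    have hFmeas : Measurable F := (hgmeas.indicator hAm).comp e.symm.measurable
    -- rewrite the LHS as an iterated integral
    have hmain : ∫⁻ t in A, g t ∂volume = ∫⁻ u, ∫⁻ v, F (u, v)
        ∂(Measure.pi fun _ : Fin m => volume) ∂(volume : Measure ℝ) := by
      rw [← lintegral_indicator hAm, volume_pi]
      have h1 := mp.lintegral_map_equiv (A.indicator g ∘ e.symm) e
      have h2 : ∀ t, (A.indicator g ∘ e.symm) (e t) = A.indicator g t := by
        intro t; simp
      calc ∫⁻ t, A.indicator g t ∂(Measure.pi fun _ => volume)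
          = ∫⁻ t, (A.indicator g ∘ e.symm) (e t) ∂(Measure.pi fun _ => volume) := by
            exact lintegral_congr fun t => (h2 t).symm
        _ = ∫⁻ p, A.indicator g (e.symm p)
            ∂((volume : Measure ℝ).prod (Measure.pi fun _ : Fin m => volume)) := h1.symm
        _ = ∫⁻ u, ∫⁻ v, F (u, v) ∂(Measure.pi fun _ : Fin m => volume) ∂volume := by
            rw [lintegral_prod _ (hFmeas.aemeasurable)]
    -- inner integral evaluation
    have hinner : ∀ u : ℝ, (∫⁻ v, F (u, v) ∂(Measure.pi fun _ : Fin m => volume))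
        = s0.indicator (fun u => ENNReal.ofReal
            (negD ψ (L - m) (u + ((∑ j : Fin m, a j.succ) + c)))) u := by
      intro u
      by_cases hu : u ∈ s0
      · rw [indicator_of_mem hu]
        have hFu : ∀ v : Fin m → ℝ, F (u, v) =
            s1.indicator (fun v => ENNReal.ofReal
              (negD ψ L ((∑ j : Fin m, v j) + (u + c)))) v := by
          intro v
          by_cases hv : v ∈ s1
          · rw [indicator_of_mem hv, hFdef]
            simp only
            rw [indicator_of_mem ((hmem u v).2 ⟨hu, hv⟩), hgdef]
            simp only
            rw [hsum]
            congr 1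
            ring_nf
          · rw [indicator_of_notMem hv, hFdef]
            simp only
            rw [indicator_of_notMem (fun h => hv ((hmem u v).1 h).2)]
        have hu0 : 0 < u := lt_of_le_of_lt (ha 0) hu
        have hsnn : 0 ≤ ∑ j : Fin m, a j.succ := Finset.sum_nonneg (fun j _ => ha j.succ)
        calc ∫⁻ v, F (u, v) ∂(Measure.pi fun _ : Fin m => volume)
            = ∫⁻ v in s1, ENNReal.ofReal (negD ψ L ((∑ j : Fin m, v j) + (u + c)))
                ∂(Measure.pi fun _ : Fin m => volume) := by
              rw [lintegral_congr hFu, lintegral_indicator hs1m]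
          _ = ENNReal.ofReal (negD ψ (L - m) ((∑ j : Fin m, a j.succ) + (u + c))) := by
              rw [← volume_pi]
              exact ih hm (fun j => a j.succ) (fun j => ha j.succ) (u + c)
                (by linarith) (by positivity)
          _ = ENNReal.ofReal (negD ψ (L - m) (u + ((∑ j : Fin m, a j.succ) + c))) := by
              congr 1; ring_nf
      · rw [indicator_of_notMem hu]
        have : ∀ v : Fin m → ℝ, F (u, v) = 0 := by
          intro v
          rw [hFdef]
          simp only
          rw [indicator_of_notMem (fun h => hu ((hmem u v).1 h).1)]
        rw [lintegral_congr this, lintegral_zero]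
    -- outer integral
    obtain ⟨k, hk⟩ : ∃ k, L - m = k + 1 := ⟨L - m - 1, by omega⟩
    have hsnn : 0 ≤ ∑ j : Fin m, a j.succ := Finset.sum_nonneg (fun j _ => ha j.succ)
    have hsum_a : a 0 + ((∑ j : Fin m, a j.succ) + c) = (∑ i, a i) + c := by
      rw [Fin.sum_univ_succ]; ring
    calc ∫⁻ t in A, g t ∂volume
        = ∫⁻ u, s0.indicator (fun u => ENNReal.ofReal
            (negD ψ (L - m) (u + ((∑ j : Fin m, a j.succ) + c)))) u ∂(volume : Measure ℝ) := by
          rw [hmain]; exact lintegral_congr hinner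
      _ = ∫⁻ u in s0, ENNReal.ofReal
            (negD ψ (L - m) (u + ((∑ j : Fin m, a j.succ) + c))) ∂volume := by
          rw [lintegral_indicator measurableSet_Ioi]
      _ = ENNReal.ofReal (negD ψ (L - (m+1)) ((∑ i, a i) + c)) := by
          rw [hk]
          have hres := step_lintegral S (k := k) (by omega) (a := a 0)
            (c := (∑ j : Fin m, a j.succ) + c) (ha 0) (by linarith) (by rw [hsum_a]; exact hpos)
          rw [hres, hsum_a]
          congr 2
          omega

lemma negD_zero_eq (ψ : ℝ → ℝ) : negD ψ 0 = ψ := by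
  funext z; simp [negD]

lemma keyM {n : ℕ} {ψ : ℝ → ℝ} (S : Setup n ψ) {l : ℕ} (hl1 : 1 ≤ l) (hl : l ≤ n)
    {z : ℝ} (hz : 0 ≤ z) :
    ∫⁻ t in univ.pi (fun _ : Fin l => Ioi (0:ℝ)),
        ENNReal.ofReal (negD ψ l ((∑ i, t i) + z)) = ENNReal.ofReal (ψ z) := by
  have hmeasl : Measurable (negD ψ l) := by
    obtain ⟨l', rfl⟩ : ∃ l', l = l' + 1 := ⟨l - 1, by omega⟩
    exact measurable_negD_succ ψ l'
  have hKK := keyK S l hl hl1 l le_rfl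
  rcases eq_or_lt_of_le hz with rfl | hzpos
  · -- z = 0 : monotone limit
    set piset : Set (Fin l → ℝ) := univ.pi (fun _ => Ioi (0:ℝ)) with hpiset
    have hpm : MeasurableSet piset := MeasurableSet.univ_pi (fun _ => measurableSet_Ioi)
    set f : ℕ → (Fin l → ℝ) → ℝ≥0∞ :=
      fun k t => ENNReal.ofReal (negD ψ l ((∑ i, t i) + 1/(k+1))) with hf
    have hfK : ∀ k : ℕ, ∫⁻ t in piset, f k t = ENNReal.ofReal (ψ (1/(k+1))) := by
      intro k
      have := hKK (fun _ => 0) (fun _ => le_rfl) (1/(k+1)) (by positivity)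
        (by simp; positivity)
      simp only [Finset.sum_const, smul_zero, zero_add, Nat.sub_self, negD_zero_eq] at this
      simpa [hf, hpiset, one_div] using this
    have hsumpos : ∀ t : Fin l → ℝ, t ∈ piset → 0 < ∑ i, t i := by
      intro t ht
      have : (Finset.univ : Finset (Fin l)).Nonempty := by
        rw [Finset.univ_nonempty_iff]
        exact Fin.pos_iff_nonempty.1 (by omega)
      exact Finset.sum_pos (fun i _ => ht i (mem_univ _)) this
    have hsup : ∀ t ∈ piset, (⨆ k : ℕ, f k t)
        = ENNReal.ofReal (negD ψ l ((∑ i, t i) + 0)) := by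
      intro t ht
      have hst := hsumpos t ht
      have hmono : Monotone fun k : ℕ => f k t := by
        intro k k' hkk
        apply ENNReal.ofReal_le_ofReal
        apply S.anti l hl
        · exact mem_Ioi.2 (by positivity)
        · exact mem_Ioi.2 (by positivity)
        · have h1 : (1:ℝ)/(k'+1) ≤ 1/(k+1) := by
            apply one_div_le_one_div_of_le (by positivity)
            exact_mod_cast by omega
          linarith
      have htendsto : Tendsto (fun k : ℕ => f k t) atTop
          (𝓝 (ENNReal.ofReal (negD ψ l ((∑ i, t i) + 0)))) := by
        have h1 : Tendsto (fun k : ℕ => (∑ i, t i) + 1/(k+1)) atTop (𝓝 ((∑ i, t i) + 0)) :=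
          tendsto_const_nhds.add tendsto_one_div_add_atTop_nhds_zero_nat
        have h2 : ContinuousAt (negD ψ l) ((∑ i, t i) + 0) :=
          (continuousOn_const.mul (S.cont l hl)).continuousAt
            (Ioi_mem_nhds (by simpa using hst))
        exact (ENNReal.continuous_ofReal.continuousAt.tendsto.comp ((h2.tendsto).comp h1))
      exact tendsto_nhds_unique (tendsto_atTop_iSup hmono) htendsto
    calc ∫⁻ t in piset, ENNReal.ofReal (negD ψ l ((∑ i, t i) + 0))
        = ∫⁻ t in piset, ⨆ k : ℕ, f k t := by
          refine setLIntegral_congr_fun hpm ?_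
          exact fun t ht => (hsup t ht).symm
      _ = ⨆ k : ℕ, ∫⁻ t in piset, f k t := by
          refine lintegral_iSup' (fun k => ?_) ?_
          · exact (Measurable.ennreal_ofReal (hmeasl.comp
              ((Finset.measurable_sum _ (fun i _ => measurable_pi_apply i)).add_const _)
              )).aemeasurable
          · filter_upwards [ae_restrict_mem hpm] with t ht
            intro k k' hkk
            have hst := hsumpos t ht
            apply ENNReal.ofReal_le_ofReal
            apply S.anti l hl (mem_Ioi.2 (by positivity)) (mem_Ioi.2 (by positivity))
            have h1 : (1:ℝ)/(k'+1) ≤ 1/(k+1) := by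
              apply one_div_le_one_div_of_le (by positivity)
              exact_mod_cast by omega
            linarith
      _ = ⨆ k : ℕ, ENNReal.ofReal (ψ (1/(k+1))) := by
          exact iSup_congr hfK
      _ = ENNReal.ofReal (ψ 0) := by
          have hmono2 : Monotone fun k : ℕ => ENNReal.ofReal (ψ (1/(k+1))) := by
            intro k k' hkk
            apply ENNReal.ofReal_le_ofReal
            apply S.psianti (mem_Ici.2 (by positivity : (0:ℝ) ≤ 1/(k'+1))) (mem_Ici.2 (by positivity : (0:ℝ) ≤ 1/(k+1)))
            apply one_div_le_one_div_of_le (by positivity)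
            exact_mod_cast by omega
          have ht2 : Tendsto (fun k : ℕ => ENNReal.ofReal (ψ (1/(k+1)))) atTop
              (𝓝 (ENNReal.ofReal (ψ 0))) := by
            have h1 : Tendsto (fun k : ℕ => (1:ℝ)/(k+1)) atTop (𝓝[Ici 0] 0) := by
              rw [tendsto_nhdsWithin_iff]
              exact ⟨tendsto_one_div_add_atTop_nhds_zero_nat,
                Eventually.of_forall (fun k => mem_Ici.2 (by positivity))⟩
            have h2 : Tendsto ψ (𝓝[Ici 0] 0) (𝓝 (ψ 0)) :=
              (S.psicontIci 0 self_mem_Ici).tendsto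
            exact ENNReal.continuous_ofReal.continuousAt.tendsto.comp (h2.comp h1)
          exact tendsto_nhds_unique (tendsto_atTop_iSup hmono2) ht2
  · -- z > 0
    have := hKK (fun _ => 0) (fun _ => le_rfl) z hz (by simpa using hzpos)
    simp only [Finset.sum_const, smul_zero, zero_add, Nat.sub_self, negD_zero_eq] at this
    simpa using this

lemma pseudoInv_isLeast {d : ℕ} {ψ φ : ℝ → ℝ} (hg : IsStrictGenerator d ψ φ)
    {t : ℝ} (ht0 : 0 < t) (ht1 : t ≤ 1) :
    IsLeast {w : ℝ | 0 ≤ w ∧ ψ w ≤ t} (φ t) := by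
  obtain ⟨hr, hpos, hinv⟩ := hg
  have hφnn : 0 ≤ φ t := hr.xi_nonneg t ht0 ht1
  have hψφ : ψ (φ t) = t := hr.eta_xi t ht0 ht1
  constructor
  · exact ⟨hφnn, le_of_eq hψφ⟩
  · rintro w ⟨hw0, hw⟩
    by_contra hcon
    push_neg at hcon
    have := hr.strict_anti w (φ t) hw0 hcon (by rw [hψφ]; exact ht0)
    rw [hψφ] at this
    linarith

lemma pseudoInv_eq_phi {d : ℕ} {ψ φ : ℝ → ℝ} (hg : IsStrictGenerator d ψ φ)
    {t : ℝ} (ht0 : 0 < t) (ht1 : t ≤ 1) : pseudoInv ψ t = φ t :=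
  (pseudoInv_isLeast hg ht0 ht1).csInf_eq

lemma pseudoInv_psi {d : ℕ} {ψ φ : ℝ → ℝ} (hg : IsStrictGenerator d ψ φ)
    {w : ℝ} (hw : 0 ≤ w) : pseudoInv ψ (ψ w) = w := by
  have hψle1 : ψ w ≤ 1 := by
    have := hg.1.antitoneOn (self_mem_Ici) (mem_Ici.2 hw) hw
    rwa [hg.1.at_zero] at this
  rw [pseudoInv_eq_phi hg (hg.2.1 w hw) hψle1]
  exact hg.2.2 w hw

lemma pseudoInv_nonneg' (ψ : ℝ → ℝ) (t : ℝ) : 0 ≤ pseudoInv ψ t := by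
  unfold pseudoInv
  rcases eq_empty_or_nonempty {z : ℝ | 0 ≤ z ∧ ψ z ≤ t} with h | h
  · rw [h, Real.sInf_empty]
  · exact Real.sInf_nonneg (fun x hx => hx.1)

lemma measurable_pseudoInv {d : ℕ} {ψ φ : ℝ → ℝ} (hg : IsStrictGenerator d ψ φ) :
    Measurable (pseudoInv ψ) := by
  have hpos := hg.2.1
  -- empty set for t ≤ 0
  have hempty : ∀ t : ℝ, t ≤ 0 → {z : ℝ | 0 ≤ z ∧ ψ z ≤ t} = ∅ := by
    intro t ht
    ext z; simp only [mem_setOf_eq, mem_empty_iff_false, iff_false, not_and, not_le]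
    intro hz; exact lt_of_le_of_lt ht (hpos z hz)
  have hzero : ∀ t : ℝ, t ≤ 0 → pseudoInv ψ t = 0 := by
    intro t ht; unfold pseudoInv; rw [hempty t ht, Real.sInf_empty]
  -- antitone on positives
  have hanti : ∀ t t' : ℝ, 0 < t → t ≤ t' → pseudoInv ψ t' ≤ pseudoInv ψ t := by
    intro t t' ht htt
    unfold pseudoInv
    have hne : {z : ℝ | 0 ≤ z ∧ ψ z ≤ t}.Nonempty := by
      have := hg.1.tendsto_zero.eventually (eventually_le_nhds ht)
      rcases (this.and (eventually_ge_atTop (0:ℝ))).exists with ⟨w, hw1, hw2⟩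
      exact ⟨w, hw2, hw1⟩
    refine csInf_le_csInf ⟨0, fun x hx => hx.1⟩ hne ?_
    exact fun w hw => ⟨hw.1, le_trans hw.2 htt⟩
  apply measurable_of_Ioi
  intro q
  rcases lt_or_ge q 0 with hq | hq
  · have : (pseudoInv ψ) ⁻¹' Ioi q = univ := by
      ext t; simp only [mem_preimage, mem_Ioi, mem_univ, iff_true]
      exact lt_of_lt_of_le hq (pseudoInv_nonneg' ψ t)
    rw [this]; exact MeasurableSet.univ
  · apply Set.OrdConnected.measurableSet
    constructor
    intro t1 h1 t2 h2 t ht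
    simp only [mem_preimage, mem_Ioi] at h1 h2 ⊢
    have ht1pos : 0 < t1 := by
      by_contra hcon
      push_neg at hcon
      rw [hzero t1 hcon] at h1
      exact absurd h1 (not_lt.2 hq)
    have htpos : 0 < t := lt_of_lt_of_le ht1pos ht.1
    exact lt_of_lt_of_le h2 (hanti t t2 htpos ht.2)

/-- **Equation (3)** (disintegration of the generator). Let `C` be a strict
`d`-dimensional Archimedean copula with generator `ψ` and `ℓ ∈ {1,…,d-2}`, and let
`μ_{C^{1:ℓ}}` (here `ν`) be the measure of the marginal copula `C^{1:ℓ}` (characterized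
by `ν([0,x]) = ψ(Σᵢφ(xᵢ))`). Then for every `z ∈ [0,∞)`:
`ψ(z) = ∫_{[0,1]^ℓ} ψˣ(z) dμ_{C^{1:ℓ}}(x)`. -/
theorem generator_disintegration
    (d l : ℕ) (hd : 2 ≤ d) (hl1 : 1 ≤ l) (hl2 : l ≤ d - 2)
    (ψ φ : ℝ → ℝ) (hgen : IsStrictGenerator d ψ φ)
    (ν : Measure (Fin l → ℝ)) (hνp : IsProbabilityMeasure ν)
    (hνc : ν (unitCube l) = 1)
    (hν : ∀ x : Fin l → ℝ, (∀ i, x i ∈ Ioc (0:ℝ) 1) →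
      ν (lowerBox x) = ENNReal.ofReal (ψ (∑ i, φ (x i)))) :
    ∀ z : ℝ, 0 ≤ z → ψ z = ∫ x, psiX ψ φ x z ∂ν := by
  have S : Setup (d-2) ψ := Setup.of_gen hgen
  have hln : l ≤ d - 2 := hl2
  obtain ⟨l'', hl''⟩ : ∃ k, l = k + 1 := ⟨l - 1, by omega⟩
  have hr := hgen.1
  have hpos := hgen.2.1
  have hinv := hgen.2.2
  have hψφ : ∀ t : ℝ, 0 < t → t ≤ 1 → ψ (φ t) = t := hr.eta_xi
  have hφnn : ∀ t : ℝ, 0 < t → t ≤ 1 → 0 ≤ φ t := hr.xi_nonneg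
  have hψ0 : ψ 0 = 1 := hr.at_zero
  have hψle1 : ∀ w : ℝ, 0 ≤ w → ψ w ≤ 1 := by
    intro w hw
    have := S.psianti self_mem_Ici (mem_Ici.2 hw) hw
    rwa [hψ0] at this
  have hφ1 : φ 1 = 0 := by
    have h1 : ψ (φ 1) = 1 := hψφ 1 one_pos le_rfl
    by_contra hcon
    have h2 : 0 < φ 1 := lt_of_le_of_ne (hφnn 1 one_pos le_rfl) (Ne.symm hcon)
    have := hr.strict_anti 0 (φ 1) le_rfl h2 (by rw [h1]; norm_num)
    rw [h1, hψ0] at this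
    exact lt_irrefl _ this
  have hmeasl : Measurable (negD ψ l) := by
    rw [hl'']; exact measurable_negD_succ ψ l''
  -- the density measure
  set piset : Set (Fin l → ℝ) := univ.pi (fun _ => Ioi (0:ℝ)) with hpisetdef
  have hpm : MeasurableSet piset := MeasurableSet.univ_pi (fun _ => measurableSet_Ioi)
  set dens : (Fin l → ℝ) → ℝ≥0∞ := fun t => ENNReal.ofReal (negD ψ l (∑ i, t i))
    with hdensdef
  have hdensmeas : Measurable dens :=
    Measurable.ennreal_ofReal (hmeasl.comp
      (Finset.measurable_sum _ (fun i _ => measurable_pi_apply i)))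
  set ρ : Measure (Fin l → ℝ) := (volume.restrict piset).withDensity dens with hρdef
  set T : (Fin l → ℝ) → (Fin l → ℝ) := fun t i => ψ (max (t i) 0) with hTdef
  have hψmaxcont : Continuous (fun u : ℝ => ψ (max u 0)) := by
    apply hr.continuousOn.comp_continuous (continuous_max.comp
      (continuous_id.prodMk continuous_const))
    exact fun u => mem_Ici.2 (le_max_right u 0)
  have hTmeas : Measurable T :=
    measurable_pi_lambda _ (fun i => hψmaxcont.measurable.comp (measurable_pi_apply i))
  have hTapp : ∀ (t : Fin l → ℝ) (i : Fin l), T t i = ψ (max (t i) 0) := fun _ _ => rfl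
  set μ0 : Measure (Fin l → ℝ) := ρ.map T with hμ0def
  -- ρ of sets: general formula
  have hρapply : ∀ s : Set (Fin l → ℝ), MeasurableSet s →
      ρ s = ∫⁻ t in s ∩ piset, dens t ∂volume := by
    intro s hs
    rw [hρdef, withDensity_apply _ hs, Measure.restrict_restrict hs]
  -- ρ of upper boxes
  have hρbox : ∀ a : Fin l → ℝ, (∀ i, 0 ≤ a i) →
      ρ (univ.pi fun i => Ici (a i)) = ENNReal.ofReal (ψ (∑ i, a i)) := by
    intro a ha
    rw [hρapply _ (MeasurableSet.univ_pi (fun i => measurableSet_Ici))]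
    have hinter : (univ.pi fun i => Ici (a i)) ∩ piset
        = univ.pi (fun i => Ici (a i) ∩ Ioi 0) := by
      rw [hpisetdef, ← Set.pi_inter_distrib]
    rcases eq_or_lt_of_le (Finset.sum_nonneg (fun i _ => ha i)) with hsum0 | hsumpos
    · -- all aᵢ = 0
      have hia : ∀ i, a i = 0 := by
        intro i
        have := (Finset.sum_eq_zero_iff_of_nonneg (fun i _ => ha i)).1 hsum0.symm
        exact this i (Finset.mem_univ i)
      have : (univ.pi fun i => Ici (a i) ∩ Ioi 0) = piset := by
        rw [hpisetdef]
        refine Set.pi_congr rfl (fun i _ => ?_)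
        rw [hia i]
        ext u
        simp only [mem_inter_iff, mem_Ici, mem_Ioi, and_iff_right_iff_imp]
        exact fun h => le_of_lt h
      rw [hinter, this, ← hsum0]
      have := keyM S hl1 hln (z := 0) le_rfl
      simpa [hdensdef] using this
    · -- positive total; compare with open box a.e.
      have haeeq : (univ.pi fun i => Ici (a i) ∩ Ioi 0)
          =ᵐ[volume] (univ.pi fun i => Ioi (a i)) := by
        have hnull : (volume : Measure (Fin l → ℝ)) (⋃ i, {t : Fin l → ℝ | t i = a i}) = 0 := by
          refine measure_iUnion_null fun i => ?_
          rw [volume_pi]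
          exact Measure.pi_hyperplane (fun _ : Fin l => (volume : Measure ℝ)) i (a i)
        rw [Filter.eventuallyEq_set]
        rw [← compl_mem_ae_iff] at hnull
        filter_upwards [hnull] with t ht
        simp only [compl_iUnion, mem_iInter, mem_compl_iff, mem_setOf_eq] at ht
        simp only [Set.mem_pi, mem_univ, forall_true_left, mem_inter_iff, mem_Ici, mem_Ioi,
          true_implies]
        constructor
        · intro h i
          rcases (h i).1.lt_or_eq with h1 | h1
          · exact h1
          · exact absurd h1.symm (ht i)
        · intro h i
          exact ⟨le_of_lt (h i), lt_of_le_of_lt (ha i) (h i)⟩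
      rw [hinter, setLIntegral_congr haeeq]
      have := keyK S l hln hl1 l le_rfl a ha 0 le_rfl (by simpa using hsumpos)
      simpa [hdensdef, negD_zero_eq] using this
  -- total mass of ρ
  have hρuniv : ρ univ = 1 := by
    rw [hρapply _ MeasurableSet.univ, univ_inter]
    have := keyM S hl1 hln (z := 0) le_rfl
    rw [hψ0] at this
    have h2 : ENNReal.ofReal (1:ℝ) = 1 := by simp
    rw [← h2]
    simpa [hdensdef] using this
  haveI hμ0p : IsProbabilityMeasure μ0 := by
    constructor
    rw [hμ0def, Measure.map_apply hTmeas MeasurableSet.univ, preimage_univ, hρuniv]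
  -- ν-null sets
  have hcubem : MeasurableSet (unitCube l) := by
    have : unitCube l = univ.pi (fun _ : Fin l => Icc (0:ℝ) 1) := by
      ext t
      simp only [unitCube, mem_setOf_eq, Set.mem_pi, mem_univ, true_implies]
    rw [this]
    exact MeasurableSet.univ_pi (fun _ => measurableSet_Icc)
  have hcubec : ν (unitCube l)ᶜ = 0 := by
    have := measure_compl hcubem (measure_ne_top ν _)
    rw [hνc, measure_univ] at this
    simpa using this
  have hνneg : ∀ i0 : Fin l, ν {t : Fin l → ℝ | t i0 ≤ 0} = 0 := by
    intro i0
    have hbound : ∀ k : ℕ, ν {t : Fin l → ℝ | t i0 ≤ 0} ≤ ENNReal.ofReal (1/(k+1)) := by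
      intro k
      set ε : ℝ := 1/(k+1) with hε
      have hε0 : 0 < ε := by positivity
      have hε1 : ε ≤ 1 := by
        rw [hε]
        apply div_le_one_of_le₀ _ (by positivity)
        exact_mod_cast by omega
      set xε : Fin l → ℝ := fun i => if i = i0 then ε else 1 with hxε
      have hxmem : ∀ i, xε i ∈ Ioc (0:ℝ) 1 := by
        intro i
        rw [hxε]
        by_cases h : i = i0 <;> simp [h, hε0, hε1]
      have hsub : {t : Fin l → ℝ | t i0 ≤ 0} ⊆ lowerBox xε ∪ (unitCube l)ᶜ := by
        intro t ht
        by_cases htc : t ∈ unitCube l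
        · left
          intro i
          rw [hxε]
          by_cases h : i = i0
          · subst h; simp only [if_pos rfl]; exact le_trans ht (le_of_lt hε0)
          · simp only [if_neg h]; exact (htc i).2
        · right; exact htc
      have hsum : (∑ i, φ (xε i)) = φ ε := by
        have : ∀ i : Fin l, φ (xε i) = if i = i0 then φ ε else 0 := by
          intro i
          rw [hxε]
          by_cases h : i = i0 <;> simp [h, hφ1]
        rw [Finset.sum_congr rfl (fun i _ => this i)]
        simp
      calc ν {t : Fin l → ℝ | t i0 ≤ 0} ≤ ν (lowerBox xε ∪ (unitCube l)ᶜ) :=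
            measure_mono hsub
        _ ≤ ν (lowerBox xε) + ν (unitCube l)ᶜ := measure_union_le _ _
        _ = ENNReal.ofReal (ψ (φ ε)) := by rw [hcubec, add_zero, hν xε hxmem, hsum]
        _ = ENNReal.ofReal ε := by rw [hψφ ε hε0 hε1]
    have htend : Tendsto (fun k : ℕ => ENNReal.ofReal (1/(k+1))) atTop (𝓝 0) := by
      have h1 : Tendsto (fun k : ℕ => (1:ℝ)/(k+1)) atTop (𝓝 0) :=
        tendsto_one_div_add_atTop_nhds_zero_nat
      have := (ENNReal.continuous_ofReal.continuousAt (x := (0:ℝ))).tendsto.comp h1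
      simpa [Function.comp_def] using this
    have := ge_of_tendsto htend (Eventually.of_forall hbound)
    exact le_antisymm this (by simp)
  have hνout : ν {x : Fin l → ℝ | ¬ ∀ i, x i ∈ Ioc (0:ℝ) 1} = 0 := by
    refine measure_mono_null (t := (⋃ i, {t : Fin l → ℝ | t i ≤ 0}) ∪ (unitCube l)ᶜ) ?_ ?_
    · intro t ht
      simp only [mem_setOf_eq, not_forall] at ht
      obtain ⟨i, hi⟩ := ht
      simp only [mem_Ioc, not_and_or, not_lt, not_le] at hi
      rcases hi with h | h
      · left; exact mem_iUnion.2 ⟨i, h⟩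
      · right
        intro hc
        exact absurd (hc i).2 (not_le.2 h)
    · refine measure_union_null (measure_iUnion_null fun i => hνneg i) hcubec
  -- lowerBox is a measurable pi set
  have hlb : ∀ x : Fin l → ℝ, lowerBox x = univ.pi fun i => Iic (x i) := by
    intro x; ext t; simp [lowerBox, Set.mem_pi, Pi.le_def]
  have hlbm : ∀ x : Fin l → ℝ, MeasurableSet (lowerBox x) := by
    intro x; rw [hlb]; exact MeasurableSet.univ_pi (fun _ => measurableSet_Iic)
  -- the generating π-system
  set C : Set (Set (Fin l → ℝ)) :=
    {s | ∃ x : Fin l → ℝ, s = univ.pi fun i => Iic (x i)} with hCdef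
  have hCgen : (inferInstance : MeasurableSpace (Fin l → ℝ))
      = MeasurableSpace.generateFrom C := by
    have h1 : ∀ _i : Fin l, IsCountablySpanning (range (Iic : ℝ → Set ℝ)) := by
      intro _
      refine ⟨fun k => Iic (k : ℝ), fun k => mem_range_self _, ?_⟩
      ext u
      simp only [mem_iUnion, mem_Iic, mem_univ, iff_true]
      exact exists_nat_ge u
    have h3 : (inferInstance : MeasurableSpace (Fin l → ℝ))
        = @MeasurableSpace.pi (Fin l) (fun _ => ℝ)
            (fun _ => MeasurableSpace.generateFrom (range Iic)) := by
      have : (inferInstance : MeasurableSpace ℝ)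
          = MeasurableSpace.generateFrom (range Iic) := by
        rw [← borel_eq_generateFrom_Iic ℝ]
        exact BorelSpace.measurable_eq
      calc (inferInstance : MeasurableSpace (Fin l → ℝ))
          = @MeasurableSpace.pi (Fin l) (fun _ => ℝ)
              (fun _ => (inferInstance : MeasurableSpace ℝ)) := rfl
        _ = _ := by rw [this]
    rw [h3, generateFrom_pi_eq h1]
    congr 1
    ext s
    constructor
    · rintro ⟨f, hf, rfl⟩
      choose x hx using fun i => hf i (mem_univ i)
      exact ⟨x, Set.pi_congr rfl (fun i _ => (hx i).symm)⟩
    · rintro ⟨x, rfl⟩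
      exact ⟨fun i => Iic (x i), fun i _ => mem_range_self _, rfl⟩
  have hCpi : IsPiSystem C := by
    rintro s ⟨x, rfl⟩ t ⟨y, rfl⟩ -
    refine ⟨fun i => min (x i) (y i), ?_⟩
    rw [← Set.pi_inter_distrib]
    exact Set.pi_congr rfl (fun i _ => Iic_inter_Iic)
  -- agreement on boxes
  have hagree : ∀ s ∈ C, ν s = μ0 s := by
    rintro s ⟨x, rfl⟩
    rw [← hlb]
    by_cases hx : ∀ i, 0 < x i
    · set y : Fin l → ℝ := fun i => min (x i) 1 with hy
      have hymem : ∀ i, y i ∈ Ioc (0:ℝ) 1 := fun i =>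
        ⟨lt_min (hx i) one_pos, min_le_right _ _⟩
      have hφynn : ∀ i, 0 ≤ φ (y i) := fun i => hφnn _ (hymem i).1 (hymem i).2
      have hν1 : ν (lowerBox x) = ENNReal.ofReal (ψ (∑ i, φ (y i))) := by
        have hle : ν (lowerBox x) ≤ ν (lowerBox y) := by
          have hsub : lowerBox x ⊆ lowerBox y ∪ (unitCube l)ᶜ := by
            intro t ht
            by_cases htc : t ∈ unitCube l
            · left; intro i; exact le_min (ht i) (htc i).2
            · right; exact htc
          calc ν (lowerBox x) ≤ ν (lowerBox y ∪ (unitCube l)ᶜ) := measure_mono hsub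
            _ ≤ ν (lowerBox y) + ν (unitCube l)ᶜ := measure_union_le _ _
            _ = ν (lowerBox y) := by rw [hcubec, add_zero]
        have hge : ν (lowerBox y) ≤ ν (lowerBox x) :=
          measure_mono (fun t ht i => le_trans (ht i) (min_le_left _ _))
        rw [le_antisymm hle hge, hν y hymem]
      have hμ1 : μ0 (lowerBox x) = ENNReal.ofReal (ψ (∑ i, φ (y i))) := by
        rw [hμ0def, Measure.map_apply hTmeas (hlbm x), hρapply _ (hTmeas (hlbm x))]
        have hseteq : T ⁻¹' lowerBox x ∩ piset
            = (univ.pi fun i => Ici (φ (y i))) ∩ piset := by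
          ext t
          simp only [mem_inter_iff, mem_preimage, lowerBox, mem_setOf_eq, Set.mem_pi,
            mem_univ, true_implies, mem_Ici, hpisetdef, mem_Ioi, and_congr_left_iff]
          intro htp
          constructor
          · intro h i
            have htnn : 0 ≤ t i := le_of_lt (htp i)
            have hTt : ψ (t i) ≤ x i := by
              have h2 := h i
              rw [hTapp] at h2
              rwa [max_eq_left htnn] at h2
            have hle_y : ψ (t i) ≤ y i := le_min hTt (hψle1 _ htnn)
            by_contra hcon
            push_neg at hcon
            have := hr.strict_anti (t i) (φ (y i)) htnn hcon
              (by rw [hψφ _ (hymem i).1 (hymem i).2]; exact (hymem i).1)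
            rw [hψφ _ (hymem i).1 (hymem i).2] at this
            linarith
          · intro h i
            rw [hTapp, max_eq_left (le_of_lt (htp i))]
            calc ψ (t i) ≤ ψ (φ (y i)) :=
                  S.psianti (mem_Ici.2 (hφynn i)) (mem_Ici.2 (le_of_lt (htp i))) (h i)
              _ = y i := hψφ _ (hymem i).1 (hymem i).2
              _ ≤ x i := min_le_left _ _
        rw [hseteq, ← hρapply _ (MeasurableSet.univ_pi fun i => measurableSet_Ici),
          hρbox _ hφynn]
      rw [hν1, hμ1]
    · push_neg at hx
      obtain ⟨i0, hi0⟩ := hx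
      have hν0 : ν (lowerBox x) = 0 :=
        measure_mono_null (fun t ht => le_trans (ht i0) hi0) (hνneg i0)
      have hμ00 : μ0 (lowerBox x) = 0 := by
        rw [hμ0def, Measure.map_apply hTmeas (hlbm x)]
        have hemp : T ⁻¹' lowerBox x = ∅ := by
          ext t
          simp only [mem_preimage, lowerBox, mem_setOf_eq, mem_empty_iff_false, iff_false,
            not_forall]
          refine ⟨i0, fun h => ?_⟩
          have := hpos (max (t i0) 0) (le_max_right _ _)
          rw [hTapp] at h
          linarith [le_trans h hi0]
        rw [hemp]; exact measure_empty
      rw [hν0, hμ00]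
  have hνμ0 : ν = μ0 :=
    MeasureTheory.ext_of_generate_finite C hCgen hCpi hagree
      (by rw [measure_univ, measure_univ])
  -- final computation
  intro z hz
  have hGm : Measurable (pseudoInv ψ) := measurable_pseudoInv hgen
  set Sm : (Fin l → ℝ) → ℝ := fun x => ∑ i, pseudoInv ψ (x i) with hSm
  have hSmMeas : Measurable Sm :=
    Finset.measurable_sum _ (fun i _ => hGm.comp (measurable_pi_apply i))
  set G : (Fin l → ℝ) → ℝ := fun x => negD ψ l (Sm x + z) / negD ψ l (Sm x) with hG
  have hGmeas : Measurable G :=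
    (hmeasl.comp (hSmMeas.add_const z)).div (hmeasl.comp hSmMeas)
  have hpsiXeq : ∀ x : Fin l → ℝ, (∀ i, x i ∈ Ioc (0:ℝ) 1) → psiX ψ φ x z = G x := by
    intro x hx
    have hsum_eq : Sm x = ∑ i, φ (x i) := by
      rw [hSm]
      exact Finset.sum_congr rfl (fun i _ => pseudoInv_eq_phi hgen (hx i).1 (hx i).2)
    rw [hG]
    simp only
    rw [hsum_eq]
    unfold psiX negD
    rw [mul_div_mul_left _ _ (pow_ne_zero l (by norm_num : (-1:ℝ) ≠ 0))]
  have hae : ∀ᵐ x ∂ν, psiX ψ φ x z = G x := by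
    rw [ae_iff]
    apply measure_mono_null _ hνout
    intro x hxmem
    simp only [mem_setOf_eq] at hxmem ⊢
    intro hall
    exact hxmem (hpsiXeq x hall)
  have hint1 : ∫ x, psiX ψ φ x z ∂ν = ∫ x, G x ∂ν := integral_congr_ae hae
  have hint2 : ∫ x, G x ∂ν = ∫ x, G (T x) ∂ρ := by
    rw [hνμ0, hμ0def]
    exact integral_map hTmeas.aemeasurable hGmeas.aestronglyMeasurable
  have hρpiset : ∀ᵐ t ∂ρ, t ∈ piset := by
    have h0 : ρ pisetᶜ = 0 := by
      rw [hρapply _ hpm.compl, compl_inter_self]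
      simp
    rw [ae_iff]
    exact h0
  set H : (Fin l → ℝ) → ℝ :=
    fun t => negD ψ l ((∑ i, t i) + z) / negD ψ l (∑ i, t i) with hH
  have hHmeas : Measurable H :=
    (hmeasl.comp ((Finset.measurable_sum _
      (fun i _ => measurable_pi_apply i)).add_const z)).div
      (hmeasl.comp (Finset.measurable_sum _ (fun i _ => measurable_pi_apply i)))
  have hsumpos : ∀ t : Fin l → ℝ, t ∈ piset → 0 < ∑ i, t i := by
    intro t ht
    have hne : (Finset.univ : Finset (Fin l)).Nonempty := by
      rw [Finset.univ_nonempty_iff]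
      exact Fin.pos_iff_nonempty.1 (by omega)
    exact Finset.sum_pos (fun i _ => ht i (mem_univ _)) hne
  have hGT : ∀ t ∈ piset, G (T t) = H t := by
    intro t ht
    have htnn : ∀ i, 0 ≤ t i := fun i => le_of_lt (ht i (mem_univ i))
    rw [hG]
    simp only
    have hSmT : Sm (T t) = ∑ i, t i := by
      rw [hSm]
      refine Finset.sum_congr rfl (fun i _ => ?_)
      rw [hTapp, max_eq_left (htnn i)]
      exact pseudoInv_psi hgen (htnn i)
    rw [hSmT, hH]
  have hint3 : ∫ t, G (T t) ∂ρ = ∫ t, H t ∂ρ := by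
    apply integral_congr_ae
    filter_upwards [hρpiset] with t ht using hGT t ht
  have hHnn : 0 ≤ᵐ[ρ] H := by
    filter_upwards [hρpiset] with t ht
    have hst := hsumpos t ht
    exact div_nonneg (S.nonneg l hln _ (by linarith)) (S.nonneg l hln _ hst)
  have hint4 : ∫ t, H t ∂ρ = (∫⁻ t, ENNReal.ofReal (H t) ∂ρ).toReal :=
    integral_eq_lintegral_of_nonneg_ae hHnn hHmeas.aestronglyMeasurable
  have hlint : ∫⁻ t, ENNReal.ofReal (H t) ∂ρ = ENNReal.ofReal (ψ z) := by
    rw [hρdef, lintegral_withDensity_eq_lintegral_mul _ hdensmeas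
      (Measurable.ennreal_ofReal hHmeas)]
    have hcong : ∀ᵐ t ∂(volume.restrict piset),
        (dens * fun t => ENNReal.ofReal (H t)) t
          = ENNReal.ofReal (negD ψ l ((∑ i, t i) + z)) := by
      filter_upwards [ae_restrict_mem hpm] with t ht
      have hst := hsumpos t ht
      simp only [Pi.mul_apply, hdensdef]
      by_cases h0 : negD ψ l (∑ i, t i) = 0
      · have hnum : negD ψ l ((∑ i, t i) + z) = 0 :=
          negD_strictanti_zero S hln hst (by linarith) h0
        rw [h0, hnum, hH]
        simp [h0]
      · rw [← ENNReal.ofReal_mul (S.nonneg l hln _ hst), hH]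
        congr 1
        rw [mul_comm, div_mul_cancel₀ _ h0]
    rw [lintegral_congr_ae hcong]
    exact keyM S hl1 hln hz
  rw [hint1, hint2, hint3, hint4, hlint, ENNReal.toReal_ofReal (le_of_lt (hpos z hz))]
end AuxDisint
end
end
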